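/- arXiv:2605.14706 — 4 statements merged into one kernel-verified Lean document; each statement's English description precedes it below -/
import Mathlib

section
/- In the lattice graph G with sources A_i = (i,0,b) and sinks B_j = (j,a,0), the weighted path enumerator satisfies w(A_i → B_j) = Σ_{k ≥ 0} e_k(z_1,...,z_b) · e_{j−i+k}(x_1,...,x_a), where the sum of path weights runs over all directed paths from A_i to B_j and the weight of a path is the product of its edge weights. -/
attribute [local instance] Classical.propDecidable

noncomputable section

/-- The elementary symmetric polynomial `e_k(y_1,…,y_m)` (equal to `1` for `k = 0`
and to `0` for `k > m`). -/
def esym {R : Type*} [CommSemiring R] (m : ℕ) (y : ℕ → R) (k : ℕ) : R :=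
  ∑ s ∈ (Finset.Icc 1 m).powersetCard k, ∏ i ∈ s, y i

/-- `e_k(y_1,…,y_m)` for an integer index `k`, equal to `0` for `k < 0`. -/
def esymZ {R : Type*} [CommSemiring R] (m : ℕ) (y : ℕ → R) (k : ℤ) : R :=
  if 0 ≤ k then esym m y k.toNat else 0

/-- Vertices of the lattice graph `G`, as points of `ℤ³` (coordinates `(x,y,z)`). -/
abbrev V3 := ℤ × ℤ × ℤ

/-- The edges of the floor–wall lattice graph `G`: floor forward edges
`(i,0,j) → (i,0,j-1)` and floor left edges `(i,0,j) → (i-1,0,j-1)` for `j ∈ [b]`;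
wall upward edges `(i,j-1,0) → (i,j,0)` and wall right edges
`(i-1,j-1,0) → (i,j,0)` for `j ∈ [a]`. -/
def IsEdge (a b : ℕ) (u v : V3) : Prop :=
  (u.2.1 = 0 ∧ 1 ≤ u.2.2 ∧ u.2.2 ≤ (b : ℤ) ∧
    (v = (u.1, 0, u.2.2 - 1) ∨ v = (u.1 - 1, 0, u.2.2 - 1))) ∨
  (u.2.2 = 0 ∧ 0 ≤ u.2.1 ∧ u.2.1 + 1 ≤ (a : ℤ) ∧
    (v = (u.1, u.2.1 + 1, 0) ∨ v = (u.1 + 1, u.2.1 + 1, 0)))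

/-- The weight of an edge of `G`: `1` for floor forward edges, `z_j` for floor
left edges out of level `z = j`, `1` for wall upward edges, `x_j` for wall right
edges into level `y = j` (and `0` on non-edges). -/
def edgeWeight {R : Type*} [CommSemiring R] (a b : ℕ) (x z : ℕ → R) (u v : V3) : R :=
  if u.2.1 = 0 ∧ 1 ≤ u.2.2 ∧ u.2.2 ≤ (b : ℤ) ∧ v = (u.1, 0, u.2.2 - 1) then 1
  else if u.2.1 = 0 ∧ 1 ≤ u.2.2 ∧ u.2.2 ≤ (b : ℤ) ∧ v = (u.1 - 1, 0, u.2.2 - 1) then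
    z u.2.2.toNat
  else if u.2.2 = 0 ∧ 0 ≤ u.2.1 ∧ u.2.1 + 1 ≤ (a : ℤ) ∧ v = (u.1, u.2.1 + 1, 0) then 1
  else if u.2.2 = 0 ∧ 0 ≤ u.2.1 ∧ u.2.1 + 1 ≤ (a : ℤ) ∧ v = (u.1 + 1, u.2.1 + 1, 0) then
    x (u.2.1 + 1).toNat
  else 0

/-- A directed path in `G` from `X` to `Y`, recorded as its list of vertices. -/
def IsPathFrom (a b : ℕ) (X Y : V3) (l : List V3) : Prop :=
  l.head? = some X ∧ l.getLast? = some Y ∧ l.Chain' (IsEdge a b)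

/-- The weight of a path: the product of the weights of its edges. -/
def pathWeight {R : Type*} [CommSemiring R] (a b : ℕ) (x z : ℕ → R) (l : List V3) : R :=
  ((l.zip l.tail).map (fun p => edgeWeight a b x z p.1 p.2)).prod

/-- The weighted path enumerator `w(X → Y) = Σ_{P : X → Y} w(P)`. -/
def pathEnum {R : Type*} [CommSemiring R] (a b : ℕ) (x z : ℕ → R) (X Y : V3) : R :=
  ∑ᶠ (l : List V3) (_ : IsPathFrom a b X Y l), pathWeight a b x z l

/-- The variables `x_i`. -/
def xv : ℕ → MvPolynomial (ℕ ⊕ ℕ) ℤ := fun i => MvPolynomial.X (Sum.inl i)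
/-- The variables `z_j`. -/
def zv : ℕ → MvPolynomial (ℕ ⊕ ℕ) ℤ := fun j => MvPolynomial.X (Sum.inr j)

namespace Stmt7Aux

open Finset

variable {R : Type*} [CommSemiring R] {a b : ℕ}

/-- elementary symmetric polynomial over an arbitrary index finset, with integer index. -/
def ES (s : Finset ℕ) (y : ℕ → R) (k : ℤ) : R :=
  if 0 ≤ k then ∑ S ∈ s.powersetCard k.toNat, ∏ i ∈ S, y i else 0

lemma ES_empty (y : ℕ → R) (k : ℤ) : ES ∅ y k = if k = 0 then 1 else 0 := by
  rcases lt_trichotomy k 0 with h | h | h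
  · rw [ES, if_neg (by omega), if_neg (by omega)]
  · subst h; simp [ES]
  · rw [ES, if_pos (by omega), if_neg (by omega)]
    rw [powersetCard_eq_empty.2 (by simp; omega)]
    simp

lemma ES_of_card_lt {s : Finset ℕ} (y : ℕ → R) {k : ℤ} (h : (s.card : ℤ) < k) :
    ES s y k = 0 := by
  rw [ES, if_pos (by omega), powersetCard_eq_empty.2 (by omega), sum_empty]

lemma ES_insert {c : ℕ} {s : Finset ℕ} (hc : c ∉ s) (y : ℕ → R) (k : ℤ) :
    ES (insert c s) y k = ES s y k + y c * ES s y (k - 1) := by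
  rcases lt_trichotomy k 0 with h | h | h
  · rw [ES, if_neg (by omega), ES, if_neg (by omega), ES, if_neg (by omega)]; ring
  · subst h
    simp [ES]
  · have hk : k.toNat = (k - 1).toNat + 1 := by omega
    rw [ES, if_pos (by omega), ES, if_pos (by omega), ES, if_pos (by omega), hk,
      powersetCard_succ_insert hc, sum_union, sum_image]
    · congr 1
      rw [Finset.mul_sum]
      apply sum_congr rfl
      intro S hS
      rw [mem_powersetCard] at hS
      rw [prod_insert (fun hmem => hc (hS.1 hmem))]
    · intro S hS T hT hST
      rw [Finset.mem_coe, mem_powersetCard] at hS hT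
      have hcs : c ∉ S := fun hm => hc (hS.1 hm)
      have hct : c ∉ T := fun hm => hc (hT.1 hm)
      rw [← Finset.erase_insert hcs, ← Finset.erase_insert hct, hST]
    · rw [Finset.disjoint_left]
      intro S hS hS'
      rw [mem_powersetCard] at hS
      rw [Finset.mem_image] at hS'
      obtain ⟨T, hT, rfl⟩ := hS'
      exact hc (hS.1 (mem_insert_self _ _))

lemma Icc_eq_insert {c d : ℕ} (h : c ≤ d) : Icc c d = insert c (Icc (c + 1) d) := by
  ext m; simp; omega


def gfun (v : V3) : ℤ := v.2.1 - v.2.2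

lemma g_of_edge {u v : V3} (h : IsEdge a b u v) : gfun v = gfun u + 1 := by
  obtain ⟨u1, u2, u3⟩ := u
  rcases h with ⟨h1, h2, h3, h | h⟩ | ⟨h1, h2, h3, h | h⟩ <;> subst h <;>
    simp_all [gfun] <;> omega

lemma x_of_edge {u v : V3} (h : IsEdge a b u v) : u.1 - 1 ≤ v.1 ∧ v.1 ≤ u.1 + 1 := by
  obtain ⟨u1, u2, u3⟩ := u
  rcases h with ⟨h1, h2, h3, h | h⟩ | ⟨h1, h2, h3, h | h⟩ <;> subst h <;>
    simp_all <;> omega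

lemma yz_of_edge {u v : V3} (h : IsEdge a b u v) :
    0 ≤ v.2.1 ∧ v.2.1 ≤ (a : ℤ) ∧ 0 ≤ v.2.2 ∧ v.2.2 ≤ (b : ℤ) := by
  obtain ⟨u1, u2, u3⟩ := u
  rcases h with ⟨h1, h2, h3, h | h⟩ | ⟨h1, h2, h3, h | h⟩ <;> subst h <;>
    simp_all <;> omega

lemma getLast_g : ∀ (l : List V3), l.Chain' (IsEdge a b) → ∀ (h : l ≠ []),
    gfun (l.getLast h) = gfun (l.head h) + l.length - 1 := by
  intro l
  induction l with
  | nil => simp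
  | cons u t ih =>
    intro hch h
    cases t with
    | nil => simp
    | cons v t' =>
      rw [List.Chain', List.isChain_cons_cons] at hch
      have h1 := g_of_edge hch.1
      have h2 := ih hch.2 (by simp)
      rw [List.getLast_cons (by simp)]
      simp only [List.head_cons, List.length_cons] at *
      push_cast at *
      omega

lemma x_bound : ∀ (l : List V3), l.Chain' (IsEdge a b) → ∀ X, l.head? = some X →
    ∀ v ∈ l, X.1 - l.length ≤ v.1 ∧ v.1 ≤ X.1 + l.length := by
  intro l
  induction l with
  | nil => simp
  | cons u t ih =>
    intro hch X hX v hv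
    simp only [List.head?_cons, Option.some.injEq] at hX
    subst hX
    rcases List.mem_cons.1 hv with rfl | hv
    · have : (0:ℤ) ≤ (v :: t).length := by positivity
      constructor <;> omega
    · cases t with
      | nil => simp at hv
      | cons w t' =>
        rw [List.Chain', List.isChain_cons_cons] at hch
        have hx := x_of_edge hch.1
        have := ih hch.2 w rfl v hv
        simp only [List.length_cons] at *
        push_cast at *
        omega

lemma yz_bound : ∀ (l : List V3), l.Chain' (IsEdge a b) →
    ∀ v ∈ l.tail, 0 ≤ v.2.1 ∧ v.2.1 ≤ (a : ℤ) ∧ 0 ≤ v.2.2 ∧ v.2.2 ≤ (b : ℤ) := by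
  intro l
  induction l with
  | nil => simp
  | cons u t ih =>
    intro hch v hv
    simp only [List.tail_cons] at hv
    cases t with
    | nil => simp at hv
    | cons w t' =>
      rw [List.Chain', List.isChain_cons_cons] at hch
      rcases List.mem_cons.1 hv with rfl | hv
      · exact yz_of_edge hch.1
      · exact ih hch.2 v hv

lemma paths_finite (X Y : V3) : {l : List V3 | IsPathFrom a b X Y l}.Finite := by
  set N : ℕ := (gfun Y - gfun X).toNat + 1 with hN
  set B : Set V3 :=
    insert X ((Set.Icc (X.1 - N) (X.1 + N)) ×ˢ (Set.Icc (0:ℤ) a) ×ˢ (Set.Icc (0:ℤ) b)) with hB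
  have hBfin : B.Finite :=
    Set.Finite.insert _ (((Set.finite_Icc _ _).prod ((Set.finite_Icc _ _).prod
      (Set.finite_Icc _ _))))
  have hsub : {l : List V3 | IsPathFrom a b X Y l} ⊆
      {l : List V3 | l.length ≤ N ∧ ∀ v ∈ l, v ∈ B} := by
    rintro l ⟨h1, h2, h3⟩
    have hne : l ≠ [] := by rintro rfl; simp at h1
    have hhead : l.head hne = X := by
      rwa [List.head?_eq_head hne, Option.some.injEq] at h1
    have hlast : l.getLast hne = Y := by
      rwa [List.getLast?_eq_getLast hne, Option.some.injEq] at h2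
    have hlen : (l.length : ℤ) = gfun Y - gfun X + 1 := by
      have := getLast_g l h3 hne
      rw [hhead, hlast] at this
      omega
    have hlenN : l.length ≤ N := by omega
    refine ⟨hlenN, fun v hv => ?_⟩
    have hx := x_bound l h3 X (by rw [List.head?_eq_head hne, hhead]) v hv
    rcases List.mem_cons.1 (by rwa [← List.cons_head_tail hne] at hv) with rfl | hv'
    · rw [hhead]; exact Set.mem_insert _ _
    · have hyz := yz_bound l h3 v hv'
      refine Set.mem_insert_iff.2 (Or.inr ?_)
      refine ⟨⟨?_, ?_⟩, ⟨hyz.1, hyz.2.1⟩, hyz.2.2.1, hyz.2.2.2⟩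
      · have : (l.length : ℤ) ≤ N := by exact_mod_cast hlenN
        omega
      · have : (l.length : ℤ) ≤ N := by exact_mod_cast hlenN
        omega
  refine Set.Finite.subset ?_ hsub
  haveI := hBfin.to_subtype
  have hsub2 : {l : List V3 | l.length ≤ N ∧ ∀ v ∈ l, v ∈ B} ⊆
      (fun l : List B => l.map Subtype.val) '' {l : List B | l.length ≤ N} := by
    rintro l ⟨hlen, hmem⟩
    refine ⟨l.attach.map (fun v => ⟨v.1, hmem v.1 v.2⟩), by simpa using hlen, ?_⟩
    simp only [List.map_map]
    exact List.attach_map_subtype_val l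
  exact Set.Finite.subset ((List.finite_length_le _ N).image _) hsub2


lemma pathWeight_singleton (x z : ℕ → R) (u : V3) : pathWeight a b x z [u] = 1 := by
  simp [pathWeight]

lemma pathWeight_cons_cons (x z : ℕ → R) (u v : V3) (t : List V3) :
    pathWeight a b x z (u :: v :: t) =
      edgeWeight a b x z u v * pathWeight a b x z (v :: t) := by
  simp [pathWeight]

lemma pathEnum_eq (x z : ℕ → R) (X Y : V3) :
    pathEnum a b x z X Y = ∑ᶠ l ∈ {l : List V3 | IsPathFrom a b X Y l}, pathWeight a b x z l :=
  rfl

lemma paths_eq (X Y v₁ v₂ : V3) (hne : X ≠ Y)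
    (hsucc : ∀ v, IsEdge a b X v ↔ v = v₁ ∨ v = v₂) :
    {l : List V3 | IsPathFrom a b X Y l} =
      (X :: ·) '' {l : List V3 | IsPathFrom a b v₁ Y l}
        ∪ (X :: ·) '' {l : List V3 | IsPathFrom a b v₂ Y l} := by
  ext l
  constructor
  · rintro ⟨h1, h2, h3⟩
    cases l with
    | nil => simp at h1
    | cons u t =>
      simp only [List.head?_cons, Option.some.injEq] at h1
      subst h1
      cases t with
      | nil =>
        simp only [List.getLast?_singleton, Option.some.injEq] at h2
        exact absurd h2 hne
      | cons w t' =>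
        rw [List.Chain', List.isChain_cons_cons] at h3
        have hw := (hsucc w).1 h3.1
        have hpath : IsPathFrom a b w Y (w :: t') :=
          ⟨rfl, by rw [← h2, List.getLast?_cons_cons], h3.2⟩
        rcases hw with rfl | rfl
        · exact Or.inl ⟨w :: t', hpath, rfl⟩
        · exact Or.inr ⟨w :: t', hpath, rfl⟩
  · rintro (⟨t, ⟨h1, h2, h3⟩, rfl⟩ | ⟨t, ⟨h1, h2, h3⟩, rfl⟩) <;>
    · cases t with
      | nil => simp at h1
      | cons w t' =>
        simp only [List.head?_cons, Option.some.injEq] at h1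
        subst h1
        refine ⟨rfl, by rw [List.getLast?_cons_cons]; exact h2, ?_⟩
        rw [List.Chain', List.isChain_cons_cons]
        exact ⟨(hsucc _).2 (by tauto), h3⟩

lemma finsum_paths_cons (x z : ℕ → R) (X Y v : V3) (hv : ∀ l, IsPathFrom a b v Y l → l.head? = some v) :
    (∑ᶠ l ∈ (X :: ·) '' {l : List V3 | IsPathFrom a b v Y l}, pathWeight a b x z l)
      = edgeWeight a b x z X v * pathEnum a b x z v Y := by
  rw [finsum_mem_image (List.cons_injective.injOn)]
  rw [pathEnum_eq, finsum_mem_eq_finite_toFinset_sum _ (paths_finite v Y),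
    finsum_mem_eq_finite_toFinset_sum _ (paths_finite v Y), Finset.mul_sum]
  apply Finset.sum_congr rfl
  intro l hl
  rw [Set.Finite.mem_toFinset] at hl
  have h1 := hv l hl
  cases l with
  | nil => simp at h1
  | cons w t =>
    simp only [List.head?_cons, Option.some.injEq] at h1
    subst h1
    exact pathWeight_cons_cons x z X w t

lemma pathEnum_step (x z : ℕ → R) (X Y v₁ v₂ : V3) (hne : X ≠ Y) (hv : v₁ ≠ v₂)
    (hsucc : ∀ v, IsEdge a b X v ↔ v = v₁ ∨ v = v₂) :
    pathEnum a b x z X Y = edgeWeight a b x z X v₁ * pathEnum a b x z v₁ Y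
      + edgeWeight a b x z X v₂ * pathEnum a b x z v₂ Y := by
  rw [pathEnum_eq, paths_eq X Y v₁ v₂ hne hsucc, finsum_mem_union,
    finsum_paths_cons x z X Y v₁ (fun l hl => hl.1), finsum_paths_cons x z X Y v₂ (fun l hl => hl.1)]
  · rw [Set.disjoint_left]
    rintro l ⟨t₁, ht₁, rfl⟩ ⟨t₂, ht₂, h⟩
    obtain rfl : t₂ = t₁ := by injection h
    exact hv (Option.some.inj (ht₁.1.symm.trans ht₂.1))
  · exact (paths_finite v₁ Y).image _
  · exact (paths_finite v₂ Y).image _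

lemma pathEnum_no_out (x z : ℕ → R) (X Y : V3) (hout : ∀ v, ¬ IsEdge a b X v) :
    pathEnum a b x z X Y = if X = Y then 1 else 0 := by
  have hset : {l : List V3 | IsPathFrom a b X Y l} = if X = Y then {[X]} else ∅ := by
    ext l
    constructor
    · rintro ⟨h1, h2, h3⟩
      cases l with
      | nil => simp at h1
      | cons u t =>
        simp only [List.head?_cons, Option.some.injEq] at h1
        subst h1
        cases t with
        | nil =>
          simp only [List.getLast?_singleton, Option.some.injEq] at h2
          rw [if_pos h2]
          rfl
        | cons w t' =>
          rw [List.Chain', List.isChain_cons_cons] at h3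
          exact absurd h3.1 (hout w)
    · intro hl
      by_cases h : X = Y
      · rw [if_pos h] at hl
        rw [hl]
        exact ⟨rfl, by simp [h], List.isChain_singleton _⟩
      · rw [if_neg h] at hl
        exact absurd hl (Set.notMem_empty l)
  rw [pathEnum_eq, hset]
  by_cases h : X = Y
  · rw [if_pos h, if_pos h, finsum_mem_singleton, pathWeight_singleton]
  · rw [if_neg h, if_neg h, finsum_mem_empty]

lemma Icc_succ_right (m : ℕ) : Icc 1 (m + 1) = insert (m + 1) (Icc 1 m) := by
  ext k; simp; omega

lemma edgeWeight_wall_up {i c : ℤ} (h0 : 0 ≤ c) (h1 : c + 1 ≤ (a : ℤ)) (x z : ℕ → R) :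
    edgeWeight a b x z (i, c, 0) (i, c + 1, 0) = 1 := by
  rw [edgeWeight, if_neg (by rintro ⟨-, h, -⟩; dsimp only at h; omega),
    if_neg (by rintro ⟨-, h, -⟩; dsimp only at h; omega), if_pos ⟨rfl, h0, h1, rfl⟩]

lemma edgeWeight_wall_right {i c : ℤ} (h0 : 0 ≤ c) (h1 : c + 1 ≤ (a : ℤ)) (x z : ℕ → R) :
    edgeWeight a b x z (i, c, 0) (i + 1, c + 1, 0) = x (c + 1).toNat := by
  rw [edgeWeight, if_neg (by rintro ⟨-, h, -⟩; dsimp only at h; omega),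
    if_neg (by rintro ⟨-, h, -⟩; dsimp only at h; omega),
    if_neg (by rintro ⟨-, -, -, h⟩; rw [Prod.mk.injEq] at h; exact absurd h.1 (by omega)),
    if_pos ⟨rfl, h0, h1, rfl⟩]

lemma edgeWeight_floor_fwd {i c : ℤ} (h1 : 1 ≤ c) (h2 : c ≤ (b : ℤ)) (x z : ℕ → R) :
    edgeWeight a b x z (i, 0, c) (i, 0, c - 1) = 1 := by
  rw [edgeWeight, if_pos ⟨rfl, h1, h2, rfl⟩]

lemma edgeWeight_floor_left {i c : ℤ} (h1 : 1 ≤ c) (h2 : c ≤ (b : ℤ)) (x z : ℕ → R) :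
    edgeWeight a b x z (i, 0, c) (i - 1, 0, c - 1) = z c.toNat := by
  rw [edgeWeight,
    if_neg (by rintro ⟨-, -, -, h⟩; rw [Prod.mk.injEq] at h; exact absurd h.1 (by omega)),
    if_pos ⟨rfl, h1, h2, rfl⟩]

lemma wall (ha : 0 < a) (x z : ℕ → R) (j : ℤ) :
    ∀ n, n ≤ a → ∀ i : ℤ,
      pathEnum a b x z (i, ((a - n : ℕ) : ℤ), 0) (j, (a : ℤ), 0)
        = ES (Icc (a - n + 1) a) x (j - i) := by
  intro n
  induction n with
  | zero =>
    intro _ i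
    have hout : ∀ v, ¬ IsEdge a b (i, ((a - 0 : ℕ) : ℤ), 0) v := by
      rintro v (⟨h1, -, -, -⟩ | ⟨-, -, h3, -⟩)
      · dsimp only at h1; omega
      · dsimp only at h3; omega
    rw [pathEnum_no_out x z _ _ hout,
      Icc_eq_empty (show ¬(a - 0 + 1 ≤ a) by omega), ES_empty]
    rcases eq_or_ne i j with rfl | h
    · rw [if_pos (by rw [Prod.mk.injEq, Prod.mk.injEq]; refine ⟨rfl, by omega, rfl⟩),
        if_pos (by omega)]
    · rw [if_neg (fun hEq => h (by rw [Prod.mk.injEq, Prod.mk.injEq] at hEq; exact hEq.1)),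
        if_neg (by omega)]
  | succ m ih =>
    intro hm i
    have hmle : m ≤ a := by omega
    have hc : ((a - (m + 1) : ℕ) : ℤ) + 1 = ((a - m : ℕ) : ℤ) := by omega
    have hcond2 : (0 : ℤ) ≤ ((a - (m + 1) : ℕ) : ℤ) := by positivity
    have hcond3 : ((a - (m + 1) : ℕ) : ℤ) + 1 ≤ (a : ℤ) := by omega
    have hne : ((i, ((a - (m + 1) : ℕ) : ℤ), 0) : V3) ≠ (j, (a : ℤ), 0) := by
      intro hEq
      rw [Prod.mk.injEq, Prod.mk.injEq] at hEq
      have := hEq.2.1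
      omega
    have hv12 : ((i, ((a - (m + 1) : ℕ) : ℤ) + 1, 0) : V3)
        ≠ ((i + 1, ((a - (m + 1) : ℕ) : ℤ) + 1, 0) : V3) := by
      intro hEq
      rw [Prod.mk.injEq] at hEq
      exact absurd hEq.1 (by omega)
    have hsucc : ∀ v, IsEdge a b (i, ((a - (m + 1) : ℕ) : ℤ), 0) v ↔
        v = ((i, ((a - (m + 1) : ℕ) : ℤ) + 1, 0) : V3)
          ∨ v = ((i + 1, ((a - (m + 1) : ℕ) : ℤ) + 1, 0) : V3) := by
      intro v
      constructor
      · rintro (⟨-, h2, -, -⟩ | ⟨-, -, -, h | h⟩)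
        · dsimp only at h2; omega
        · exact Or.inl h
        · exact Or.inr h
      · rintro (rfl | rfl)
        · exact Or.inr ⟨rfl, hcond2, hcond3, Or.inl rfl⟩
        · exact Or.inr ⟨rfl, hcond2, hcond3, Or.inr rfl⟩
    rw [pathEnum_step x z _ _ _ _ hne hv12 hsucc,
      edgeWeight_wall_up hcond2 hcond3 x z, edgeWeight_wall_right hcond2 hcond3 x z, one_mul,
      show ((((a - (m + 1) : ℕ) : ℤ)) + 1).toNat = a - m from by omega, hc,
      ih hmle i, ih hmle (i + 1),
      show a - (m + 1) + 1 = a - m from by omega,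
      Icc_eq_insert (show a - m ≤ a by omega),
      ES_insert (by intro hmem; rw [mem_Icc] at hmem; omega),
      show j - (i + 1) = j - i - 1 from by ring]

lemma floor (ha : 0 < a) (x z : ℕ → R) (j : ℤ) :
    ∀ t, t ≤ b → ∀ i : ℤ,
      pathEnum a b x z (i, 0, (t : ℤ)) (j, (a : ℤ), 0)
        = ∑ k ∈ range (b + 1), ES (Icc 1 t) z (k : ℤ) * ES (Icc 1 a) x (j - i + k) := by
  intro t
  induction t with
  | zero =>
    intro _ i
    have h0 : pathEnum a b x z (i, 0, ((0 : ℕ) : ℤ)) (j, (a : ℤ), 0)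
        = ES (Icc 1 a) x (j - i) := by
      have := wall (b := b) ha x z j a le_rfl i
      simpa using this
    rw [h0, Finset.sum_eq_single 0]
    · rw [Icc_eq_empty (show ¬(1 ≤ 0) by omega), ES_empty, if_pos (by norm_num), one_mul]
      norm_num
    · intro k _ hk
      rw [Icc_eq_empty (show ¬(1 ≤ 0) by omega), ES_empty, if_neg (by simpa using hk), zero_mul]
    · intro h
      exact absurd (mem_range.2 (by omega)) h
  | succ m ihm =>
    intro hm i
    have hc : ((m + 1 : ℕ) : ℤ) - 1 = (m : ℤ) := by push_cast; ring
    have hcond1 : (1 : ℤ) ≤ ((m + 1 : ℕ) : ℤ) := by omega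
    have hcond2 : ((m + 1 : ℕ) : ℤ) ≤ (b : ℤ) := by omega
    have hne : ((i, 0, ((m + 1 : ℕ) : ℤ)) : V3) ≠ (j, (a : ℤ), 0) := by
      intro hEq
      rw [Prod.mk.injEq, Prod.mk.injEq] at hEq
      have := hEq.2.2
      omega
    have hv12 : ((i, 0, ((m + 1 : ℕ) : ℤ) - 1) : V3)
        ≠ ((i - 1, 0, ((m + 1 : ℕ) : ℤ) - 1) : V3) := by
      intro hEq
      rw [Prod.mk.injEq] at hEq
      exact absurd hEq.1 (by omega)
    have hsucc : ∀ v, IsEdge a b (i, 0, ((m + 1 : ℕ) : ℤ)) v ↔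
        v = ((i, 0, ((m + 1 : ℕ) : ℤ) - 1) : V3)
          ∨ v = ((i - 1, 0, ((m + 1 : ℕ) : ℤ) - 1) : V3) := by
      intro v
      constructor
      · rintro (⟨-, -, -, h | h⟩ | ⟨h1, -, -, -⟩)
        · exact Or.inl h
        · exact Or.inr h
        · dsimp only at h1; omega
      · rintro (rfl | rfl)
        · exact Or.inl ⟨rfl, hcond1, hcond2, Or.inl rfl⟩
        · exact Or.inl ⟨rfl, hcond1, hcond2, Or.inr rfl⟩
    rw [pathEnum_step x z _ _ _ _ hne hv12 hsucc,
      edgeWeight_floor_fwd hcond1 hcond2 x z, edgeWeight_floor_left hcond1 hcond2 x z, one_mul,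
      show (((m + 1 : ℕ) : ℤ)).toNat = m + 1 from by omega, hc,
      ihm (by omega) i, ihm (by omega) (i - 1)]
    have hins : ∀ k : ℤ, ES (Icc 1 (m + 1)) z k
        = ES (Icc 1 m) z k + z (m + 1) * ES (Icc 1 m) z (k - 1) := by
      intro k
      rw [Icc_succ_right, ES_insert (by intro hmem; rw [mem_Icc] at hmem; omega)]
    have hrhs : ∑ k ∈ range (b + 1), ES (Icc 1 (m + 1)) z (k : ℤ) * ES (Icc 1 a) x (j - i + k)
        = (∑ k ∈ range (b + 1), ES (Icc 1 m) z (k : ℤ) * ES (Icc 1 a) x (j - i + k))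
          + ∑ k ∈ range (b + 1),
              z (m + 1) * ES (Icc 1 m) z ((k : ℤ) - 1) * ES (Icc 1 a) x (j - i + k) := by
      rw [← Finset.sum_add_distrib]
      apply Finset.sum_congr rfl
      intro k _
      rw [hins, add_mul]
    rw [hrhs]
    congr 1
    rw [Finset.sum_range_succ'
      (fun k => z (m + 1) * ES (Icc 1 m) z ((k : ℤ) - 1) * ES (Icc 1 a) x (j - i + (k : ℤ)))]
    rw [show (((0 : ℕ) : ℤ) - 1 : ℤ) = -1 from by norm_num, ES, if_neg (by norm_num), mul_zero,
      zero_mul, add_zero]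
    rw [Finset.sum_range_succ
      (fun k => ES (Icc 1 m) z (k : ℤ) * ES (Icc 1 a) x (j - (i - 1) + (k : ℤ)))]
    rw [ES_of_card_lt z (by rw [Nat.card_Icc]; omega), zero_mul, add_zero, Finset.mul_sum]
    apply Finset.sum_congr rfl
    intro k _
    have h1 : (((k + 1 : ℕ)) : ℤ) - 1 = (k : ℤ) := by push_cast; ring
    have h2 : j - (i - 1) + (k : ℤ) = j - i + (((k + 1 : ℕ)) : ℤ) := by push_cast; ring
    rw [h1, h2, mul_assoc]

end Stmt7Aux

/-- In the lattice graph `G` with source `A_i = (i,0,b)` and sink `B_j = (j,a,0)`,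
`w(A_i → B_j) = Σ_{k ≥ 0} e_k(z_1,…,z_b) e_{j-i+k}(x_1,…,x_a)`. -/
theorem statement7 (a b : ℕ) (ha : 0 < a) (hb : 0 < b) (i j : ℤ) :
    pathEnum a b xv zv (i, 0, (b : ℤ)) (j, (a : ℤ), 0)
      = ∑ᶠ k : ℕ, esym b zv k * esymZ a xv (j - i + (k : ℤ)) := by
  have h := Stmt7Aux.floor (b := b) ha xv zv j b le_rfl i
  rw [h]
  have hsupp : (Function.support fun k : ℕ => esym b zv k * esymZ a xv (j - i + (k : ℤ)))
      ⊆ ↑(Finset.range (b + 1)) := by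
    intro k hk
    simp only [Function.mem_support] at hk
    by_contra hmem
    simp only [Finset.coe_range, Set.mem_Iio, not_lt] at hmem
    apply hk
    rw [esym, Finset.powersetCard_eq_empty.2 (by rw [Nat.card_Icc]; omega), Finset.sum_empty,
      zero_mul]
  rw [finsum_eq_sum_of_support_subset _ hsupp]
  apply Finset.sum_congr rfl
  intro k _
  rw [Stmt7Aux.ES, if_pos (Int.natCast_nonneg k), Int.toNat_natCast]
  rfl
end
end

section
/- (Fixed trace generating function.) For all positive integers a, b, c and every partition λ ∈ P(min(a,b), c), as polynomials in q and t: s_λ(q, q², ..., q^a) · s_λ(t, tq, ..., tq^{b−1}) = Σ_π q^{|π|} t^{tr(π)}, where the sum runs over all plane partitions π ∈ PP(a,b,c) whose diagonal vector Tr(π) := (π_{1,1}, π_{2,2}, ..., π_{d,d}) of nonzero diagonal entries equals λ. -/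
/-!
Read a tableau `T` of shape `μ` with entries at most `n` row by row and conjugate each row:
row `i` becomes a partition whose first part is `μ_i`, whose length is at most `n - i` (the
column of `T` strictly decreases down to row `i`), and column strictness of `T` becomes the
column condition of a shifted plane partition with diagonal `μ`. Conjugation is a bijection and
preserves size. Gluing the shifted plane partition of `T₂` to the transpose of that of `T₁`
along their common diagonal `μ` gives a plane partition in `PP(a, b, c)` with diagonal `μ`, and
cutting along the diagonal inverts this. The volume is `|T₁| + |T₂| - |μ|` (the diagonal is
shared) and the trace is `|μ|`, which matches `q^{|T₁|} (t q⁻¹)^{|μ|} q^{|T₂|}`.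
-/

attribute [local instance] Classical.propDecidable

noncomputable section

/-- A plane partition with diagram inside the box `[a]×[b]×[c]`, recorded by its
matrix of heights `π i j` (0-indexed), with weakly decreasing rows and columns. -/
def IsPP (a b c : ℕ) (π : Fin a → Fin b → Fin (c+1)) : Prop :=
  (∀ (i i' : Fin a) (j : Fin b), i ≤ i' → π i' j ≤ π i j) ∧
  (∀ (i : Fin a) (j j' : Fin b), j ≤ j' → π i j' ≤ π i j)

/-- The entry `π_{i,j}` (1-based indices), zero outside the box. -/
def pent {a b c : ℕ} (π : Fin a → Fin b → Fin (c+1)) (i j : ℕ) : ℕ :=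
  if h : 1 ≤ i ∧ i ≤ a ∧ 1 ≤ j ∧ j ≤ b then
    (π ⟨i - 1, by omega⟩ ⟨j - 1, by omega⟩ : ℕ) else 0

/-- The volume `|π| = Σ_{i,j} π_{i,j}`. -/
def ppVol {a b c : ℕ} (π : Fin a → Fin b → Fin (c+1)) : ℕ :=
  ∑ i : Fin a, ∑ j : Fin b, (π i j : ℕ)

/-- The trace `tr(π) = Σ_i π_{i,i}`. -/
def ppTr {a b c : ℕ} (π : Fin a → Fin b → Fin (c+1)) : ℕ :=
  ∑ i ∈ Finset.Icc 1 (min a b), pent π i i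

/-- The set of corners of `π`: the triples `(i,j,k) ∈ D(π)` (1-based, so
`1 ≤ k ≤ π_{i,j}`) with `(i+1,j,k) ∉ D(π)` and `(i,j+1,k) ∉ D(π)`. -/
def ppCor {a b c : ℕ} (π : Fin a → Fin b → Fin (c+1)) : Finset (ℕ × ℕ × ℕ) :=
  (Finset.Icc 1 a ×ˢ Finset.Icc 1 b ×ˢ Finset.Icc 1 c).filter
    (fun p => p.2.2 ≤ pent π p.1 p.2.1 ∧ pent π (p.1 + 1) p.2.1 < p.2.2 ∧
      pent π p.1 (p.2.1 + 1) < p.2.2)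

/-- The corner-hook volume `|π|_{ch} = Σ_{(i,j,k) ∈ Cor(π)} (i+j-1)`. -/
def ppChVol {a b c : ℕ} (π : Fin a → Fin b → Fin (c+1)) : ℕ :=
  ∑ p ∈ ppCor π, (p.1 + p.2.1 - 1)

/-- The finite set `PP(a,b,c)` of plane partitions with diagram in `[a]×[b]×[c]`. -/
def ppBox (a b c : ℕ) : Finset (Fin a → Fin b → Fin (c+1)) :=
  Finset.univ.filter (IsPP a b c)

/-- A column-strict plane partition of shape `μ` with entries in `{1,…,n}`
(the entry of the cell `c` is `T c + 1`): rows weakly decreasing, columns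
strictly decreasing. -/
def IsCSPP (μ : YoungDiagram) (n : ℕ) (T : μ.cells → Fin n) : Prop :=
  (∀ c c' : μ.cells, (c : ℕ × ℕ).1 = (c' : ℕ × ℕ).1 → (c : ℕ × ℕ).2 ≤ (c' : ℕ × ℕ).2 →
      T c' ≤ T c) ∧
  (∀ c c' : μ.cells, (c : ℕ × ℕ).2 = (c' : ℕ × ℕ).2 → (c : ℕ × ℕ).1 < (c' : ℕ × ℕ).1 →
      T c' < T c)

/-- The Schur polynomial `s_μ(x_1,…,x_n)`, as the generating function of
column-strict plane partitions of shape `μ` with entries in `{1,…,n}`. -/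
def schur {R : Type*} [CommSemiring R] (n : ℕ) (μ : YoungDiagram) (x : ℕ → R) : R :=
  ∑ T ∈ Finset.univ.filter (IsCSPP μ n), ∏ c : μ.cells, x ((T c : ℕ) + 1)

open Finset

section Conjugate

variable {N M K t t' : ℕ} {f g : ℕ → ℕ}

/-- For antitone `f`, `conj N f` is the conjugate of the partition `(f 0, …, f (N - 1))`. -/
def conj (N : ℕ) (f : ℕ → ℕ) (t : ℕ) : ℕ := #{x ∈ range N | t < f x}

lemma card_filter_range_lt (K v : ℕ) : #{x ∈ range K | x < v} = min v K := by
  rw [show {x ∈ range K | x < v} = range (min v K) by ext; simp; omega, card_range]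

lemma conj_le : conj N f t ≤ N :=
  (card_filter_le _ _).trans_eq (card_range N)

lemma conj_le_conj (h : ∀ x < N, t < f x → t' < g x) : conj N f t ≤ conj N g t' :=
  card_le_card fun x hx => by
    simp only [mem_filter, mem_range] at hx ⊢
    exact ⟨hx.1, h x hx.1 hx.2⟩

lemma conj_antitone : Antitone (conj N f) :=
  fun _ _ h => conj_le_conj fun _ _ hx => h.trans_lt hx

lemma conj_eq_zero (h : ∀ x < N, f x ≤ t) : conj N f t = 0 := by
  simp only [conj, card_eq_zero, filter_eq_empty_iff, mem_range, not_lt]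
  exact h

lemma conj_congr (h : ∀ x < N, f x = g x) : conj N f t = conj N g t := by
  unfold conj
  congr 1
  exact filter_congr fun x hx => by rw [h x (mem_range.1 hx)]

lemma lt_conj_iff (hf : Antitone f) {m : ℕ} (hm : m < N) : m < conj N f t ↔ t < f m := by
  constructor
  · intro h
    by_contra! hfm
    have : {x ∈ range N | t < f x} ⊆ range m := fun x hx => by
      simp only [mem_filter, mem_range] at hx ⊢
      by_contra! hxm
      exact (hx.2.trans_le (hf hxm)).not_ge hfm
    exact (h.trans_le ((card_le_card this).trans_eq (card_range m))).false
  · intro h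
    have : range (m + 1) ⊆ {x ∈ range N | t < f x} := fun x hx => by
      simp only [mem_filter, mem_range] at hx ⊢
      exact ⟨by omega, h.trans_le (hf (by omega))⟩
    simpa [conj] using card_le_card this

lemma conj_conj (hf : Antitone f) (ht : t < N) (hM : f t ≤ M) : conj M (conj N f) t = f t := by
  have : {d ∈ range M | t < conj N f d} = {d ∈ range M | d < f t} :=
    filter_congr fun d _ => lt_conj_iff hf ht
  rw [conj, this, card_filter_range_lt, min_eq_left hM]

lemma sum_range_conj : ∑ t ∈ range K, conj N f t = ∑ x ∈ range N, min (f x) K := by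
  simp only [conj, card_filter]
  rw [sum_comm]
  refine sum_congr rfl fun x _ => ?_
  rw [← card_filter, card_filter_range_lt]

end Conjugate

namespace YoungDiagram

variable {μ : YoungDiagram} {i k M : ℕ}

lemma lt_colLen_zero (h : (i, k) ∈ μ) : i < μ.colLen 0 :=
  μ.mem_iff_lt_colLen.1 (μ.up_left_mem le_rfl (Nat.zero_le k) h)

lemma lt_rowLen_zero (h : (i, k) ∈ μ) : k < μ.rowLen 0 :=
  μ.mem_iff_lt_rowLen.1 (μ.up_left_mem (Nat.zero_le i) le_rfl h)

lemma rowLen_eq_zero (h : μ.colLen 0 ≤ i) : μ.rowLen i = 0 := by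
  by_contra hi
  exact (lt_colLen_zero (μ.mem_iff_lt_rowLen.2 (Nat.pos_of_ne_zero hi))).not_ge h

lemma sum_range_rowLen (hM : μ.colLen 0 ≤ M) :
    ∑ i ∈ range M, μ.rowLen i = #μ.cells := by
  rw [card_eq_sum_card_fiberwise (f := Prod.fst) (t := range M) fun x hx =>
    mem_range.2 ((lt_colLen_zero ((μ.mem_cells x).1 hx)).trans_le hM)]
  exact sum_congr rfl fun i _ => μ.rowLen_eq_card

end YoungDiagram

section Tableau

variable {μ : YoungDiagram} {n c M : ℕ} {T : μ.cells → Fin n} {i k : ℕ}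

def tabEntry (T : μ.cells → Fin n) (i k : ℕ) : ℕ :=
  if h : (i, k) ∈ μ then T ⟨(i, k), (μ.mem_cells _).2 h⟩ + 1 else 0

lemma tabEntry_apply (x : μ.cells) : tabEntry T x.1.1 x.1.2 = T x + 1 := by
  rw [tabEntry, dif_pos ((μ.mem_cells _).1 x.2)]

lemma tabEntry_pos_iff : 0 < tabEntry T i k ↔ (i, k) ∈ μ := by
  unfold tabEntry
  split_ifs with h <;> simp [h]

lemma tabEntry_eq_zero (h : (i, k) ∉ μ) : tabEntry T i k = 0 := dif_neg h

lemma IsCSPP.tabEntry_antitone (hT : IsCSPP μ n T) (i : ℕ) : Antitone (tabEntry T i) := by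
  intro k k' hk
  by_cases h' : (i, k') ∈ μ
  · have h : (i, k) ∈ μ := μ.up_left_mem le_rfl hk h'
    simpa [tabEntry, h, h'] using
      hT.1 ⟨_, (μ.mem_cells _).2 h⟩ ⟨_, (μ.mem_cells _).2 h'⟩ rfl hk
  · simp [tabEntry_eq_zero h']

lemma IsCSPP.tabEntry_succ_lt (hT : IsCSPP μ n T) (h : (i + 1, k) ∈ μ) :
    tabEntry T (i + 1) k < tabEntry T i k := by
  have h' : (i, k) ∈ μ := μ.up_left_mem (Nat.le_succ i) le_rfl h
  simpa [tabEntry, h, h'] using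
    hT.2 ⟨_, (μ.mem_cells _).2 h'⟩ ⟨_, (μ.mem_cells _).2 h⟩ rfl (Nat.lt_succ_self i)

lemma IsCSPP.tabEntry_le (hT : IsCSPP μ n T) (i k : ℕ) : tabEntry T i k ≤ n - i := by
  induction i with
  | zero => unfold tabEntry; split_ifs <;> omega
  | succ i ih =>
    by_cases h : (i + 1, k) ∈ μ
    · have := hT.tabEntry_succ_lt h
      omega
    · simp [tabEntry_eq_zero h]

lemma sum_tabEntry (T : μ.cells → Fin n) (hM : μ.colLen 0 ≤ M) (hc : μ.rowLen 0 ≤ c) :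
    ∑ i ∈ range M, ∑ k ∈ range c, tabEntry T i k = ∑ x, ((T x : ℕ) + 1) := by
  have hsub : μ.cells ⊆ range M ×ˢ range c := fun x hx => by
    rw [YoungDiagram.mem_cells] at hx
    simp only [mem_product, mem_range]
    exact ⟨(YoungDiagram.lt_colLen_zero hx).trans_le hM,
      (YoungDiagram.lt_rowLen_zero hx).trans_le hc⟩
  rw [← sum_product' (f := tabEntry T), ← sum_subset hsub fun x _ hx =>
    tabEntry_eq_zero fun h => hx ((μ.mem_cells _).2 h), ← sum_coe_sort μ.cells]
  exact sum_congr rfl fun x _ => tabEntry_apply x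

end Tableau

/-- A shifted plane partition with diagonal `μ`, parts at most `c` and row `i` of length at
most `n - i`: `s i d` is its entry in row `i`, `d` steps right of the diagonal. -/
structure IsShiftedPP (μ : YoungDiagram) (c n : ℕ) (s : ℕ → ℕ → ℕ) : Prop where
  antitone : ∀ i, Antitone (s i)
  succ_le : ∀ i d, s (i + 1) d ≤ s i (d + 1)
  le : ∀ i d, s i d ≤ c
  eq_zero : ∀ i d, n ≤ i + d → s i d = 0
  diag : ∀ i, s i 0 = μ.rowLen i

section Shifted

variable {μ : YoungDiagram} {n c : ℕ} {s : ℕ → ℕ → ℕ} {T : μ.cells → Fin n}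

lemma IsShiftedPP.add_le (hs : IsShiftedPP μ c n s) (e i d : ℕ) :
    s (i + e) d ≤ s i (d + e) := by
  induction e generalizing d with
  | zero => rfl
  | succ e ih => exact (hs.succ_le (i + e) d).trans ((ih (d + 1)).trans_eq (by ring_nf))

lemma IsShiftedPP.rowLen_le (hs : IsShiftedPP μ c n s) (i d : ℕ) :
    μ.rowLen (i + d) ≤ s i d := by
  simpa [hs.diag] using hs.add_le d i 0

def shifted (c : ℕ) (T : μ.cells → Fin n) (i : ℕ) : ℕ → ℕ := conj c (tabEntry T i)

def unshifted (n : ℕ) (s : ℕ → ℕ → ℕ) (i : ℕ) : ℕ → ℕ := conj (n - i) (s i)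

lemma IsCSPP.isShiftedPP_shifted (hT : IsCSPP μ n T)
    (hc : μ.rowLen 0 ≤ c) : IsShiftedPP μ c n (shifted c T) where
  antitone _ := conj_antitone
  succ_le i d := conj_le_conj fun k _ hk => by
    have := hT.tabEntry_succ_lt (tabEntry_pos_iff.1 (by omega : 0 < tabEntry T (i + 1) k))
    omega
  le _ _ := conj_le
  eq_zero i d h := conj_eq_zero fun k _ => (hT.tabEntry_le i k).trans (by omega)
  diag i := by
    have : {k ∈ range c | 0 < tabEntry T i k} = {k ∈ range c | k < μ.rowLen i} :=
      filter_congr fun k _ => by rw [tabEntry_pos_iff, μ.mem_iff_lt_rowLen]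
    rw [shifted, conj, this, card_filter_range_lt,
      min_eq_left ((μ.rowLen_anti 0 i (Nat.zero_le i)).trans hc)]

lemma IsShiftedPP.unshifted_pos (hs : IsShiftedPP μ c n s) (hcol : μ.colLen 0 ≤ n) {i k : ℕ}
    (h : (i, k) ∈ μ) : 0 < unshifted n s i k :=
  (lt_conj_iff (hs.antitone i) (by have := YoungDiagram.lt_colLen_zero h; omega)).2
    (by rw [hs.diag]; exact μ.mem_iff_lt_rowLen.1 h)

lemma IsShiftedPP.unshifted_eq_zero (hs : IsShiftedPP μ c n s) {i k : ℕ} (h : (i, k) ∉ μ) :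
    unshifted n s i k = 0 :=
  conj_eq_zero fun d _ => (hs.antitone i (Nat.zero_le d)).trans <| by
    rw [hs.diag]
    exact not_lt.1 (mt μ.mem_iff_lt_rowLen.2 h)

lemma IsShiftedPP.unshifted_lt (hs : IsShiftedPP μ c n s) {i i' k : ℕ} (hi : i < i')
    (hpos : 0 < unshifted n s i' k) : unshifted n s i' k < unshifted n s i k := by
  unfold unshifted at hpos ⊢
  set r := conj (n - i') (s i') k
  have hr : r ≤ n - i' := conj_le
  have hlt : k < s i' (r - 1) :=
    (lt_conj_iff (N := n - i') (hs.antitone i') (by omega)).1 (by omega)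
  have hstep : s i' (r - 1) ≤ s i (r - 1 + (i' - i)) := by
    simpa [Nat.add_sub_cancel' hi.le] using hs.add_le (i' - i) i (r - 1)
  have := (lt_conj_iff (N := n - i) (hs.antitone i) (by omega)).2 (hlt.trans_le hstep)
  exact lt_of_le_of_lt (by omega) this

def tableauOf (n : ℕ) (s : ℕ → ℕ → ℕ) (hcol : μ.colLen 0 ≤ n) : μ.cells → Fin n :=
  fun x => ⟨unshifted n s x.1.1 x.1.2 - 1, by
    have := YoungDiagram.lt_colLen_zero ((μ.mem_cells _).1 x.2)
    have : unshifted n s x.1.1 x.1.2 ≤ n - x.1.1 := conj_le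
    omega⟩

lemma IsShiftedPP.tabEntry_tableauOf (hs : IsShiftedPP μ c n s) (hcol : μ.colLen 0 ≤ n)
    (i k : ℕ) : tabEntry (tableauOf n s hcol) i k = unshifted n s i k := by
  by_cases h : (i, k) ∈ μ
  · have := hs.unshifted_pos hcol h
    simp only [tabEntry, h, dif_pos, tableauOf]
    omega
  · rw [tabEntry_eq_zero h, hs.unshifted_eq_zero h]

lemma IsShiftedPP.isCSPP_tableauOf (hs : IsShiftedPP μ c n s) (hcol : μ.colLen 0 ≤ n) :
    IsCSPP μ n (tableauOf n s hcol) := by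
  constructor
  · rintro ⟨⟨i, k⟩, -⟩ ⟨⟨i', k'⟩, -⟩ (rfl : i = i') (hk : k ≤ k')
    exact Nat.sub_le_sub_right (conj_antitone hk) 1
  · rintro ⟨⟨i, k⟩, -⟩ ⟨⟨i', k'⟩, hx'⟩ (rfl : k = k') (hi : i < i')
    show unshifted n s i' k - 1 < unshifted n s i k - 1
    have hpos := hs.unshifted_pos hcol ((μ.mem_cells _).1 hx')
    have := hs.unshifted_lt hi hpos
    omega

lemma IsCSPP.tableauOf_shifted (hT : IsCSPP μ n T)
    (hc : μ.rowLen 0 ≤ c) (hcol : μ.colLen 0 ≤ n) : tableauOf n (shifted c T) hcol = T := by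
  funext x
  apply Fin.ext
  have hk : x.1.2 < c := (YoungDiagram.lt_rowLen_zero ((μ.mem_cells _).1 x.2)).trans_le hc
  simp only [tableauOf, unshifted, shifted]
  rw [conj_conj (hT.tabEntry_antitone _) hk (hT.tabEntry_le _ _), tabEntry_apply]
  omega

lemma IsShiftedPP.shifted_tableauOf (hs : IsShiftedPP μ c n s) (hcol : μ.colLen 0 ≤ n) :
    shifted c (tableauOf n s hcol) = s := by
  funext i d
  rw [shifted, conj_congr fun k _ => hs.tabEntry_tableauOf hcol i k]
  by_cases hd : d < n - i
  · exact conj_conj (hs.antitone i) hd (hs.le i d)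
  · rw [hs.eq_zero i d (by omega)]
    exact conj_eq_zero fun k _ => conj_le.trans (by omega)

lemma IsCSPP.sum_shifted (hT : IsCSPP μ n T) {M : ℕ}
    (hM : μ.colLen 0 ≤ M) (hc : μ.rowLen 0 ≤ c) :
    ∑ i ∈ range M, ∑ d ∈ range (n - i), shifted c T i d = ∑ x, ((T x : ℕ) + 1) := by
  rw [← sum_tabEntry T hM hc]
  refine sum_congr rfl fun i _ => ?_
  rw [shifted, sum_range_conj]
  exact sum_congr rfl fun k _ => min_eq_left (hT.tabEntry_le i k)

end Shifted

section PlanePartition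

variable {a b c : ℕ} {μ : YoungDiagram} {π : Fin a → Fin b → Fin (c + 1)}

def ppEntry (π : Fin a → Fin b → Fin (c + 1)) (i j : ℕ) : ℕ :=
  if h : i < a ∧ j < b then π ⟨i, h.1⟩ ⟨j, h.2⟩ else 0

lemma pent_add_one (π : Fin a → Fin b → Fin (c + 1)) (i j : ℕ) :
    pent π (i + 1) (j + 1) = ppEntry π i j := by
  unfold pent ppEntry
  split_ifs <;> first | rfl | omega

lemma ppEntry_eq_zero {i j : ℕ} (h : ¬(i < a ∧ j < b)) : ppEntry π i j = 0 := dif_neg h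

lemma ppEntry_le (π : Fin a → Fin b → Fin (c + 1)) (i j : ℕ) : ppEntry π i j ≤ c := by
  unfold ppEntry
  split_ifs
  exacts [Nat.lt_succ_iff.1 (Fin.is_lt _), Nat.zero_le c]

lemma ppEntry_swap (π : Fin a → Fin b → Fin (c + 1)) (i j : ℕ) :
    ppEntry (Function.swap π) i j = ppEntry π j i := by
  unfold ppEntry
  split_ifs <;> first | rfl | omega

lemma IsPP.swap (hπ : IsPP a b c π) : IsPP b a c (Function.swap π) :=
  ⟨fun j j' i h => hπ.2 i j j' h, fun j i i' h => hπ.1 i i' j h⟩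

lemma IsPP.ppEntry_antitone_left (hπ : IsPP a b c π) {i i' j : ℕ} (h : i ≤ i') :
    ppEntry π i' j ≤ ppEntry π i j := by
  unfold ppEntry
  split_ifs with h' h''
  exacts [hπ.1 ⟨i, h''.1⟩ ⟨i', h'.1⟩ ⟨j, h'.2⟩ h, by omega, Nat.zero_le _, le_rfl]

lemma IsPP.ppEntry_antitone_right (hπ : IsPP a b c π) {i j j' : ℕ} (h : j ≤ j') :
    ppEntry π i j' ≤ ppEntry π i j := by
  simpa only [ppEntry_swap] using hπ.swap.ppEntry_antitone_left h

lemma ppTr_eq_sum (π : Fin a → Fin b → Fin (c + 1)) :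
    ppTr π = ∑ i ∈ range (min a b), ppEntry π i i := by
  rw [ppTr, ← Finset.Ico_add_one_right_eq_Icc, sum_Ico_eq_sum_range, Nat.add_sub_cancel]
  exact sum_congr rfl fun i _ => by rw [add_comm, pent_add_one]

lemma pent_diag_iff :
    (∀ i, 1 ≤ i → i ≤ min a b → pent π i i = μ.rowLen (i - 1)) ↔
      ∀ i < min a b, ppEntry π i i = μ.rowLen i := by
  constructor
  · intro h i hi
    simpa [pent_add_one] using h (i + 1) (by omega) (by omega)
  · intro h i hi₁ hi₂
    obtain ⟨i, rfl⟩ := Nat.exists_eq_add_of_le' hi₁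
    simpa [pent_add_one] using h i (by omega)

def rowSlices (π : Fin a → Fin b → Fin (c + 1)) (i d : ℕ) : ℕ := ppEntry π i (i + d)

lemma IsPP.isShiftedPP_rowSlices (hπ : IsPP a b c π)
    (hdiag : ∀ i < min a b, ppEntry π i i = μ.rowLen i) (hμ : μ.colLen 0 ≤ min a b) :
    IsShiftedPP μ c b (rowSlices π) where
  antitone _ _ _ h := hπ.ppEntry_antitone_right (by omega)
  succ_le i d := (hπ.ppEntry_antitone_left (Nat.le_succ i)).trans_eq (by rw [rowSlices]; ring_nf)
  le _ _ := ppEntry_le π _ _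
  eq_zero _ _ h := ppEntry_eq_zero (by omega)
  diag i := by
    rw [rowSlices, Nat.add_zero]
    by_cases hi : i < min a b
    · exact hdiag i hi
    · rw [ppEntry_eq_zero (by omega), μ.rowLen_eq_zero (by omega)]

lemma sum_range_rowSlices (π : Fin a → Fin b → Fin (c + 1)) (i : ℕ) :
    ∑ d ∈ range (b - i), rowSlices π i d =
      ∑ j ∈ range b, if i ≤ j then ppEntry π i j else 0 := by
  rw [← sum_filter, show {j ∈ range b | i ≤ j} = Ico i b by ext; simp; omega,
    sum_Ico_eq_sum_range]
  rfl

lemma ppVol_eq_sum (π : Fin a → Fin b → Fin (c + 1)) :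
    ppVol π = ∑ i ∈ range a, ∑ j ∈ range b, ppEntry π i j := by
  rw [ppVol, ← Fin.sum_univ_eq_sum_range]
  refine sum_congr rfl fun i _ => ?_
  rw [← Fin.sum_univ_eq_sum_range]
  exact sum_congr rfl fun j _ => by rw [ppEntry, dif_pos ⟨i.2, j.2⟩]

/-- The two families of slices meet on the diagonal, which is therefore counted twice. -/
lemma ppVol_add_ppTr (π : Fin a → Fin b → Fin (c + 1)) :
    ppVol π + ppTr π = ∑ i ∈ range a, ∑ d ∈ range (b - i), rowSlices π i d +
      ∑ j ∈ range b, ∑ d ∈ range (a - j), rowSlices (Function.swap π) j d := by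
  have htr : ppTr π = ∑ i ∈ range a, ppEntry π i i := by
    rw [ppTr_eq_sum]
    exact sum_subset (range_subset_range.2 (min_le_left a b)) fun i _ hi =>
      ppEntry_eq_zero (by simp at hi; omega)
  have hdiag_sum (i : ℕ) :
      ppEntry π i i = ∑ j ∈ range b, if i = j then ppEntry π i j else 0 := by
    rw [sum_ite_eq]
    split_ifs with h
    · rfl
    · exact ppEntry_eq_zero (by simp at h; omega)
  simp only [sum_range_rowSlices, ppEntry_swap, ppVol_eq_sum, htr]
  rw [sum_comm (s := range b), ← sum_add_distrib, ← sum_add_distrib]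
  refine sum_congr rfl fun i _ => ?_
  rw [hdiag_sum, ← sum_add_distrib, ← sum_add_distrib]
  refine sum_congr rfl fun j _ => ?_
  split_ifs <;> omega

end PlanePartition

section Glue

variable {a b c n m : ℕ} {μ : YoungDiagram} {s t : ℕ → ℕ → ℕ}

def glueFun (s t : ℕ → ℕ → ℕ) (i j : ℕ) : ℕ :=
  if i ≤ j then s i (j - i) else t j (i - j)

/-- `s` fills the upper triangle and `t` the lower one, transposed; the `min` only makes the
definition total. -/
def glue (a b c : ℕ) (s t : ℕ → ℕ → ℕ) : Fin a → Fin b → Fin (c + 1) :=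
  fun i j => ⟨min (glueFun s t i j) c, Nat.lt_succ_of_le (min_le_right _ _)⟩

lemma glueFun_comm (h : ∀ i, s i 0 = t i 0) (i j : ℕ) : glueFun t s j i = glueFun s t i j := by
  unfold glueFun
  split_ifs with h₁ h₂ h₂
  · obtain rfl := le_antisymm h₁ h₂
    rw [Nat.sub_self, h]
  · rfl
  · rfl
  · omega

lemma glueFun_antitone_right (hs : IsShiftedPP μ c n s) (ht : IsShiftedPP μ c m t) {i j j' : ℕ}
    (h : j ≤ j') : glueFun s t i j' ≤ glueFun s t i j := by
  unfold glueFun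
  split_ifs with h₁ h₂ h₂
  · exact hs.antitone i (by omega)
  · calc s i (j' - i) ≤ s i 0 := hs.antitone i (Nat.zero_le _)
      _ = μ.rowLen (j + (i - j)) := by rw [hs.diag]; congr 1; omega
      _ ≤ t j (i - j) := ht.rowLen_le j (i - j)
  · omega
  · simpa [Nat.add_sub_cancel' h, Nat.sub_add_sub_cancel (by omega : j' ≤ i) h] using
      ht.add_le (j' - j) j (i - j')

lemma glueFun_antitone_left (hs : IsShiftedPP μ c n s) (ht : IsShiftedPP μ c m t) {i i' j : ℕ}
    (h : i ≤ i') : glueFun s t i' j ≤ glueFun s t i j := by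
  have hst : ∀ i, s i 0 = t i 0 := fun i => by rw [hs.diag, ht.diag]
  rw [← glueFun_comm hst, ← glueFun_comm hst]
  exact glueFun_antitone_right ht hs h

lemma ppEntry_glue {i j : ℕ} (hi : i < a) (hj : j < b) :
    ppEntry (glue a b c s t) i j = min (glueFun s t i j) c := by
  rw [ppEntry, dif_pos ⟨hi, hj⟩]
  rfl

lemma swap_glue (h : ∀ i, s i 0 = t i 0) :
    Function.swap (glue a b c s t) = glue b a c t s := by
  funext j i
  simp only [Function.swap, glue, glueFun_comm h]

lemma isPP_glue (hs : IsShiftedPP μ c n s) (ht : IsShiftedPP μ c m t) :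
    IsPP a b c (glue a b c s t) :=
  ⟨fun _ _ _ h => min_le_min_right c (glueFun_antitone_left hs ht h),
    fun _ _ _ h => min_le_min_right c (glueFun_antitone_right hs ht h)⟩

lemma rowSlices_glue (hs : IsShiftedPP μ c b s) (ha : μ.colLen 0 ≤ a) :
    rowSlices (glue a b c s t) = s := by
  funext i d
  by_cases hbox : i < a ∧ i + d < b
  · rw [rowSlices, ppEntry_glue hbox.1 hbox.2, glueFun, if_pos (by omega),
      Nat.add_sub_cancel_left, min_eq_left (hs.le i d)]
  · rw [rowSlices, ppEntry_eq_zero hbox]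
    by_cases hb : b ≤ i + d
    · exact (hs.eq_zero i d hb).symm
    · have := hs.antitone i (Nat.zero_le d)
      rw [hs.diag, μ.rowLen_eq_zero (by omega)] at this
      omega

lemma glue_rowSlices (π : Fin a → Fin b → Fin (c + 1)) :
    glue a b c (rowSlices π) (rowSlices (Function.swap π)) = π := by
  funext i j
  apply Fin.ext
  have : glueFun (rowSlices π) (rowSlices (Function.swap π)) i j = ppEntry π i j := by
    unfold glueFun rowSlices
    split_ifs
    · congr 1; omega
    · rw [ppEntry_swap]; congr 1; omega
  rw [glue, Fin.val_mk, this, min_eq_left (ppEntry_le π i j), ppEntry, dif_pos ⟨i.2, j.2⟩]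

end Glue

section Bijection

variable {a b c : ℕ} {μ : YoungDiagram}

def ppBoxDiag (a b c : ℕ) (μ : YoungDiagram) : Finset (Fin a → Fin b → Fin (c + 1)) :=
  (ppBox a b c).filter
    (fun π => ∀ i : ℕ, 1 ≤ i → i ≤ min a b → pent π i i = μ.rowLen (i - 1))

lemma mem_ppBoxDiag {π : Fin a → Fin b → Fin (c + 1)} :
    π ∈ ppBoxDiag a b c μ ↔
      IsPP a b c π ∧ ∀ i < min a b, ppEntry π i i = μ.rowLen i := by
  simp only [ppBoxDiag, ppBox, mem_filter, mem_univ, true_and, pent_diag_iff]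

lemma ppTr_eq_card {π : Fin a → Fin b → Fin (c + 1)}
    (hdiag : ∀ i < min a b, ppEntry π i i = μ.rowLen i) (hμ : μ.colLen 0 ≤ min a b) :
    ppTr π = #μ.cells := by
  rw [ppTr_eq_sum, ← μ.sum_range_rowLen hμ]
  exact sum_congr rfl fun i hi => hdiag i (mem_range.1 hi)

lemma isShiftedPP_rowSlices_of_mem_ppBoxDiag {π : Fin a → Fin b → Fin (c + 1)}
    (hπ : π ∈ ppBoxDiag a b c μ) (hμ : μ.colLen 0 ≤ min a b) :
    IsShiftedPP μ c b (rowSlices π) ∧ IsShiftedPP μ c a (rowSlices (Function.swap π)) := by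
  obtain ⟨hπ, hdiag⟩ := mem_ppBoxDiag.1 hπ
  refine ⟨hπ.isShiftedPP_rowSlices hdiag hμ,
    hπ.swap.isShiftedPP_rowSlices (by simpa only [ppEntry_swap, min_comm] using hdiag)
      (by rwa [min_comm])⟩

variable {T₁ : μ.cells → Fin a} {T₂ : μ.cells → Fin b}

lemma glue_shifted_mem_ppBoxDiag (hT₁ : IsCSPP μ a T₁) (hT₂ : IsCSPP μ b T₂)
    (hc : μ.rowLen 0 ≤ c) :
    glue a b c (shifted c T₂) (shifted c T₁) ∈ ppBoxDiag a b c μ := by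
  have hs₂ := hT₂.isShiftedPP_shifted hc
  refine mem_ppBoxDiag.2 ⟨isPP_glue hs₂ (hT₁.isShiftedPP_shifted hc), fun i hi => ?_⟩
  rw [ppEntry_glue (by omega) (by omega), glueFun, if_pos le_rfl, Nat.sub_self, hs₂.diag,
    min_eq_left ((μ.rowLen_anti 0 i (Nat.zero_le i)).trans hc)]

lemma rowSlices_glue_shifted (hT₁ : IsCSPP μ a T₁) (hT₂ : IsCSPP μ b T₂)
    (hμ : μ.colLen 0 ≤ min a b) (hc : μ.rowLen 0 ≤ c) :
    rowSlices (glue a b c (shifted c T₂) (shifted c T₁)) = shifted c T₂ ∧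
      rowSlices (Function.swap (glue a b c (shifted c T₂) (shifted c T₁))) =
        shifted c T₁ := by
  have hs₁ := hT₁.isShiftedPP_shifted hc
  have hs₂ := hT₂.isShiftedPP_shifted hc
  rw [swap_glue fun i => by rw [hs₂.diag, hs₁.diag]]
  exact ⟨rowSlices_glue hs₂ (hμ.trans (min_le_left a b)),
    rowSlices_glue hs₁ (hμ.trans (min_le_right a b))⟩

lemma ppVol_glue_shifted (hT₁ : IsCSPP μ a T₁) (hT₂ : IsCSPP μ b T₂)
    (hμ : μ.colLen 0 ≤ min a b) (hc : μ.rowLen 0 ≤ c) :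
    ppVol (glue a b c (shifted c T₂) (shifted c T₁)) + #μ.cells =
      ∑ x, ((T₁ x : ℕ) + 1) + ∑ x, ((T₂ x : ℕ) + 1) := by
  obtain ⟨hrow, hcol⟩ := rowSlices_glue_shifted hT₁ hT₂ hμ hc
  rw [← ppTr_eq_card (mem_ppBoxDiag.1 (glue_shifted_mem_ppBoxDiag hT₁ hT₂ hc)).2 hμ,
    ppVol_add_ppTr, hrow, hcol, hT₂.sum_shifted (hμ.trans (min_le_left a b)) hc,
    hT₁.sum_shifted (hμ.trans (min_le_right a b)) hc, add_comm]

lemma weight_glue_shifted {R : Type*} [CommSemiring R] (q t : R) (hT₁ : IsCSPP μ a T₁)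
    (hT₂ : IsCSPP μ b T₂) (hμ : μ.colLen 0 ≤ min a b) (hc : μ.rowLen 0 ≤ c) :
    (∏ x, q ^ ((T₁ x : ℕ) + 1)) * ∏ x, t * q ^ ((T₂ x : ℕ) + 1 - 1) =
      q ^ ppVol (glue a b c (shifted c T₂) (shifted c T₁)) *
        t ^ ppTr (glue a b c (shifted c T₂) (shifted c T₁)) := by
  have hvol := ppVol_glue_shifted hT₁ hT₂ hμ hc
  have hS₂ : ∑ x, ((T₂ x : ℕ) + 1) = ∑ x, (T₂ x : ℕ) + #μ.cells := by
    simp [sum_add_distrib]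
  rw [ppTr_eq_card (mem_ppBoxDiag.1 (glue_shifted_mem_ppBoxDiag hT₁ hT₂ hc)).2 hμ,
    show ppVol _ = ∑ x, ((T₁ x : ℕ) + 1) + ∑ x, (T₂ x : ℕ) by omega]
  simp only [Nat.add_sub_cancel, prod_pow_eq_pow_sum, prod_mul_distrib, prod_const, card_univ,
    Fintype.card_coe]
  ring

end Bijection

theorem statement10_general (a b c : ℕ) (μ : YoungDiagram) (h1 : μ.colLen 0 ≤ min a b)
    (h2 : μ.rowLen 0 ≤ c) :
    schur a μ (fun i => (MvPolynomial.X 0 : MvPolynomial (Fin 2) ℤ) ^ i) *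
        schur b μ (fun j => MvPolynomial.X 1 * MvPolynomial.X 0 ^ (j - 1))
      = ∑ π ∈ (ppBox a b c).filter
            (fun π => ∀ i : ℕ, 1 ≤ i → i ≤ min a b → pent π i i = μ.rowLen (i - 1)),
          (MvPolynomial.X 0 : MvPolynomial (Fin 2) ℤ) ^ ppVol π *
            MvPolynomial.X 1 ^ ppTr π := by
  have ha : μ.colLen 0 ≤ a := h1.trans (min_le_left a b)
  have hb : μ.colLen 0 ≤ b := h1.trans (min_le_right a b)
  have hmem {T₁ : μ.cells → Fin a} {T₂ : μ.cells → Fin b} :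
      (T₁, T₂) ∈ univ.filter (IsCSPP μ a) ×ˢ univ.filter (IsCSPP μ b) ↔
        IsCSPP μ a T₁ ∧ IsCSPP μ b T₂ := by
    simp
  change _ = ∑ π ∈ ppBoxDiag a b c μ, _
  rw [schur, schur, sum_mul_sum, ← sum_product']
  refine sum_nbij' (fun T => glue a b c (shifted c T.2) (shifted c T.1))
    (fun π => (tableauOf a (rowSlices (Function.swap π)) ha, tableauOf b (rowSlices π) hb))
    ?_ ?_ ?_ ?_ ?_
  · rintro ⟨T₁, T₂⟩ hT
    exact glue_shifted_mem_ppBoxDiag (hmem.1 hT).1 (hmem.1 hT).2 h2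
  · intro π hπ
    obtain ⟨hrow, hcol⟩ := isShiftedPP_rowSlices_of_mem_ppBoxDiag hπ h1
    exact hmem.2 ⟨hcol.isCSPP_tableauOf ha, hrow.isCSPP_tableauOf hb⟩
  · rintro ⟨T₁, T₂⟩ hT
    obtain ⟨hT₁, hT₂⟩ := hmem.1 hT
    obtain ⟨hrow, hcol⟩ := rowSlices_glue_shifted hT₁ hT₂ h1 h2
    rw [hrow, hcol, hT₁.tableauOf_shifted h2 ha, hT₂.tableauOf_shifted h2 hb]
  · intro π hπ
    obtain ⟨hrow, hcol⟩ := isShiftedPP_rowSlices_of_mem_ppBoxDiag hπ h1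
    rw [hrow.shifted_tableauOf hb, hcol.shifted_tableauOf ha, glue_rowSlices]
  · rintro ⟨T₁, T₂⟩ hT
    exact weight_glue_shifted _ _ (hmem.1 hT).1 (hmem.1 hT).2 h1 h2

/-- **Fixed trace generating function.** For all positive integers `a, b, c` and
every partition `μ ∈ P(min(a,b), c)`, as polynomials in `q = X 0` and `t = X 1`:
`s_μ(q,…,q^a) s_μ(t,tq,…,tq^{b-1}) = Σ_{π ∈ PP(a,b,c), Tr(π) = μ} q^{|π|} t^{tr(π)}`,
where `Tr(π) = μ` means that `π_{i,i} = μ_i` for all `i`. -/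
theorem statement10 (a b c : ℕ) (ha : 0 < a) (hb : 0 < b) (hc : 0 < c)
    (μ : YoungDiagram) (h1 : μ.colLen 0 ≤ min a b) (h2 : μ.rowLen 0 ≤ c) :
    schur a μ (fun i => (MvPolynomial.X 0 : MvPolynomial (Fin 2) ℤ) ^ i) *
        schur b μ (fun j => MvPolynomial.X 1 * MvPolynomial.X 0 ^ (j - 1))
      = ∑ π ∈ (ppBox a b c).filter
            (fun π => ∀ i : ℕ, 1 ≤ i → i ≤ min a b → pent π i i = μ.rowLen (i - 1)),
          (MvPolynomial.X 0 : MvPolynomial (Fin 2) ℤ) ^ ppVol π *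
            MvPolynomial.X 1 ^ ppTr π :=
  statement10_general a b c μ h1 h2
end
end

section
/- For every positive integer c, the volume and the corner-hook volume have symmetric joint distribution over PP(2,2,c): as polynomials in q and t, Σ_{π ∈ PP(2,2,c)} q^{|π|} t^{|π|_ch} = Σ_{π ∈ PP(2,2,c)} q^{|π|_ch} t^{|π|}. -/
attribute [local instance] Classical.propDecidable

noncomputable section

variable {c : ℕ}

lemma sum_if_Icc (c hi lo1 lo2 w : ℕ) (h : hi ≤ c) :
    (∑ k ∈ Finset.Icc 1 c, if k ≤ hi ∧ lo1 < k ∧ lo2 < k then w else 0)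
    = (hi - max lo1 lo2) * w := by
  rw [← Finset.sum_filter]
  have : (Finset.Icc 1 c).filter (fun k => k ≤ hi ∧ lo1 < k ∧ lo2 < k)
      = Finset.Ioc (max lo1 lo2) hi := by
    ext k
    simp only [Finset.mem_filter, Finset.mem_Icc, Finset.mem_Ioc]
    omega
  rw [this, Finset.sum_const, Nat.card_Ioc, smul_eq_mul]

lemma card_filter_Icc (c hi lo1 lo2 : ℕ) (h : hi ≤ c) :
    ((Finset.Icc 1 c).filter (fun k => k ≤ hi ∧ lo1 < k ∧ lo2 < k)).card
    = hi - max lo1 lo2 := by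
  have : (Finset.Icc 1 c).filter (fun k => k ≤ hi ∧ lo1 < k ∧ lo2 < k)
      = Finset.Ioc (max lo1 lo2) hi := by
    ext k
    simp only [Finset.mem_filter, Finset.mem_Icc, Finset.mem_Ioc]
    omega
  rw [this, Nat.card_Ioc]

lemma sum_if_Icc2 (c hi lo w : ℕ) (h : hi ≤ c) :
    (∑ k ∈ Finset.Icc 1 c, if k ≤ hi ∧ lo < k then w else 0)
    = (hi - lo) * w := by
  rw [← Finset.sum_filter]
  have : (Finset.Icc 1 c).filter (fun k => k ≤ hi ∧ lo < k)
      = Finset.Ioc lo hi := by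
    ext k
    simp only [Finset.mem_filter, Finset.mem_Icc, Finset.mem_Ioc]
    omega
  rw [this, Finset.sum_const, Nat.card_Ioc, smul_eq_mul]

lemma vol_eq (π : Fin 2 → Fin 2 → Fin (c+1)) :
    ppVol π = (π 0 0 : ℕ) + π 0 1 + π 1 0 + π 1 1 := by
  simp [ppVol, Fin.sum_univ_two]; ring

lemma chvol_eq (π : Fin 2 → Fin 2 → Fin (c+1)) (hπ : IsPP 2 2 c π) :
    ppChVol π = ((π 0 0 : ℕ) + π 0 1 + π 1 0 + min (π 0 1 : ℕ) (π 1 0)) - π 1 1 := by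
  have p11 : pent π 1 1 = π 0 0 := by simp [pent]
  have p12 : pent π 1 2 = π 0 1 := by simp [pent]
  have p21 : pent π 2 1 = π 1 0 := by simp [pent]
  have p22 : pent π 2 2 = π 1 1 := by simp [pent]
  have p31 : pent π 3 1 = 0 := by simp [pent]
  have p32 : pent π 3 2 = 0 := by simp [pent]
  have p13 : pent π 1 3 = 0 := by simp [pent]
  have p23 : pent π 2 3 = 0 := by simp [pent]
  have h1 : (π 1 0 : ℕ) ≤ π 0 0 := hπ.1 0 1 0 (by decide)
  have h2 : (π 1 1 : ℕ) ≤ π 0 1 := hπ.1 0 1 1 (by decide)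
  have h3 : (π 0 1 : ℕ) ≤ π 0 0 := hπ.2 0 0 1 (by decide)
  have h4 : (π 1 1 : ℕ) ≤ π 1 0 := hπ.2 1 0 1 (by decide)
  have b00 : (π 0 0 : ℕ) ≤ c := by have := (π 0 0).isLt; omega
  have b01 : (π 0 1 : ℕ) ≤ c := by have := (π 0 1).isLt; omega
  have b10 : (π 1 0 : ℕ) ≤ c := by have := (π 1 0).isLt; omega
  have b11 : (π 1 1 : ℕ) ≤ c := by have := (π 1 1).isLt; omega
  have hIcc : (Finset.Icc 1 2 : Finset ℕ) = {1, 2} := rfl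
  rw [ppChVol, ppCor, Finset.sum_filter, Finset.sum_product, hIcc,
    Finset.sum_pair (by norm_num)]
  have h12 : (1:ℕ) ≠ 2 := by norm_num
  rw [Finset.sum_product, Finset.sum_product, Finset.sum_pair h12, Finset.sum_pair h12]
  norm_num [p11, p12, p21, p22, p31, p32, p13, p23]
  rw [sum_if_Icc c _ _ _ _ b01, sum_if_Icc c _ _ _ _ b10,
    sum_if_Icc2 c _ _ _ b11, card_filter_Icc c _ _ _ b00]
  omega

def flipPP {c : ℕ} (π : Fin 2 → Fin 2 → Fin (c+1)) : Fin 2 → Fin 2 → Fin (c+1) :=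
  fun i j => if i = 1 ∧ j = 1 then
    ⟨min (π 0 1 : ℕ) (π 1 0 : ℕ) - (π 1 1 : ℕ), by have := (π 0 1).isLt; omega⟩
  else π i j

lemma flip00 (π : Fin 2 → Fin 2 → Fin (c+1)) : flipPP π 0 0 = π 0 0 :=
  if_neg (by decide)

lemma flip01 (π : Fin 2 → Fin 2 → Fin (c+1)) : flipPP π 0 1 = π 0 1 :=
  if_neg (by decide)

lemma flip10 (π : Fin 2 → Fin 2 → Fin (c+1)) : flipPP π 1 0 = π 1 0 :=
  if_neg (by decide)

lemma flip11 (π : Fin 2 → Fin 2 → Fin (c+1)) :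
    (flipPP π 1 1 : ℕ) = min (π 0 1 : ℕ) (π 1 0 : ℕ) - (π 1 1 : ℕ) := by
  have : flipPP π 1 1 = ⟨min (π 0 1 : ℕ) (π 1 0 : ℕ) - (π 1 1 : ℕ),
      by have := (π 0 1).isLt; omega⟩ :=
    if_pos (⟨rfl, rfl⟩ : (1 : Fin 2) = 1 ∧ (1 : Fin 2) = 1)
  rw [this]

lemma flip_isPP (π : Fin 2 → Fin 2 → Fin (c+1)) (hπ : IsPP 2 2 c π) :
    IsPP 2 2 c (flipPP π) := by
  have h1 : (π 1 0 : ℕ) ≤ π 0 0 := hπ.1 0 1 0 (by decide)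
  have h2 : (π 1 1 : ℕ) ≤ π 0 1 := hπ.1 0 1 1 (by decide)
  have h3 : (π 0 1 : ℕ) ≤ π 0 0 := hπ.2 0 0 1 (by decide)
  have h4 : (π 1 1 : ℕ) ≤ π 1 0 := hπ.2 1 0 1 (by decide)
  have f00 : (flipPP π 0 0 : ℕ) = π 0 0 := by rw [flip00]
  have f01 : (flipPP π 0 1 : ℕ) = π 0 1 := by rw [flip01]
  have f10 : (flipPP π 1 0 : ℕ) = π 1 0 := by rw [flip10]
  have f11 := flip11 π
  constructor <;> intro i i' j hle <;> rw [Fin.le_def] at hle ⊢ <;>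
    fin_cases i <;> fin_cases i' <;> fin_cases j <;>
    simp only [Fin.zero_eta, Fin.mk_one, f00, f01, f10, f11] at hle ⊢ <;>
    omega

lemma flipPP_flipPP (π : Fin 2 → Fin 2 → Fin (c+1)) (hπ : IsPP 2 2 c π) :
    flipPP (flipPP π) = π := by
  have h2 : (π 1 1 : ℕ) ≤ π 0 1 := hπ.1 0 1 1 (by decide)
  have h4 : (π 1 1 : ℕ) ≤ π 1 0 := hπ.2 1 0 1 (by decide)
  funext i j
  by_cases h : i = 1 ∧ j = 1
  · obtain ⟨hi, hj⟩ := h; subst hi; subst hj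
    have f01 : (flipPP π 0 1 : ℕ) = π 0 1 := by rw [flip01]
    have f10 : (flipPP π 1 0 : ℕ) = π 1 0 := by rw [flip10]
    apply Fin.ext
    rw [flip11, flip11, f01, f10]
    omega
  · simp only [flipPP]
    rw [if_neg h, if_neg h]

lemma flip_vol (π : Fin 2 → Fin 2 → Fin (c+1)) (hπ : IsPP 2 2 c π) :
    ppVol (flipPP π) = ppChVol π := by
  have h2 : (π 1 1 : ℕ) ≤ π 0 1 := hπ.1 0 1 1 (by decide)
  have h4 : (π 1 1 : ℕ) ≤ π 1 0 := hπ.2 1 0 1 (by decide)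
  rw [vol_eq, chvol_eq π hπ, flip00, flip01, flip10, flip11]
  omega

lemma flip_chvol (π : Fin 2 → Fin 2 → Fin (c+1)) (hπ : IsPP 2 2 c π) :
    ppChVol (flipPP π) = ppVol π := by
  have h2 : (π 1 1 : ℕ) ≤ π 0 1 := hπ.1 0 1 1 (by decide)
  have h4 : (π 1 1 : ℕ) ≤ π 1 0 := hπ.2 1 0 1 (by decide)
  rw [vol_eq, chvol_eq _ (flip_isPP π hπ), flip00, flip01, flip10, flip11]
  omega

/-- Over `PP(2,2,c)`, the volume and the corner-hook volume have symmetric joint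
distribution: as polynomials in `q = X 0` and `t = X 1`,
`Σ_π q^{|π|} t^{|π|_{ch}} = Σ_π q^{|π|_{ch}} t^{|π|}`. -/
theorem statement12 (c : ℕ) (hc : 0 < c) :
    ∑ π ∈ ppBox 2 2 c,
        (MvPolynomial.X 0 : MvPolynomial (Fin 2) ℤ) ^ ppVol π *
          MvPolynomial.X 1 ^ ppChVol π
      = ∑ π ∈ ppBox 2 2 c,
        (MvPolynomial.X 0 : MvPolynomial (Fin 2) ℤ) ^ ppChVol π *
          MvPolynomial.X 1 ^ ppVol π := by
  apply Finset.sum_nbij' (fun π => flipPP π) (fun π => flipPP π)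
  · intro π hπ
    simp only [ppBox, Finset.mem_filter, Finset.mem_univ, true_and] at *
    exact flip_isPP π hπ
  · intro π hπ
    simp only [ppBox, Finset.mem_filter, Finset.mem_univ, true_and] at *
    exact flip_isPP π hπ
  · intro π hπ
    simp only [ppBox, Finset.mem_filter, Finset.mem_univ, true_and] at hπ
    exact flipPP_flipPP π hπ
  · intro π hπ
    simp only [ppBox, Finset.mem_filter, Finset.mem_univ, true_and] at hπ
    exact flipPP_flipPP π hπ
  · intro π hπ
    simp only [ppBox, Finset.mem_filter, Finset.mem_univ, true_and] at hπ
    rw [flip_vol π hπ, flip_chvol π hπ]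
end
end

section
/- For all positive integers a, b, c, as polynomials in q and t: Σ_{λ ∈ P(min(a,b), c)} s_λ(q, q², ..., q^a) · s_λ(t, tq, ..., tq^{b−1}) = Σ_{π ∈ PP(a,b,c)} q^{|π|} t^{tr(π)}. -/
attribute [local instance] Classical.propDecidable

noncomputable section

/-!
Cut a plane partition `π ∈ PP(a,b,c)` along its diagonal. For `i ≤ min a b` the column segment
`π_{i,i} ≥ π_{i+1,i} ≥ ⋯ ≥ π_{a,i}` and the row segment `π_{i,i} ≥ π_{i,i+1} ≥ ⋯ ≥ π_{i,b}` are
partitions with the same largest part `π_{i,i}`. Their conjugates are the `i`-th rows of two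
column-strict tableaux `P` and `Q` of a common shape `λ` with `λ_i = π_{i,i}`, with entries at most
`a` and `b` respectively; the monotonicity of `π` between consecutive slices is exactly the strict
decrease down the columns of `P` and `Q`, and the construction can be undone. Conjugation preserves
size, so the entries of `P` add up to `Σ_{r ≥ s} π_{r,s}`, the entries of `Q` lowered by one add up
to `Σ_{r < s} π_{r,s}`, and `Q` has `|λ| = tr π` cells. Hence the weight
`q^{ΣP} · t^{|λ|} q^{Σ(Q-1)}` of the pair is `q^{|π|} t^{tr π}`.
-/

namespace PlanePartitionSchur

open Finset

@[to_additive]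
lemma prod_Icc_eq_prod_range_succ {M : Type*} [CommMonoid M] (f : ℕ → M) (n : ℕ) :
    ∏ i ∈ Icc 1 n, f i = ∏ i ∈ range n, f (i + 1) := by
  rw [range_eq_Ico, prod_Ico_add', zero_add, Ico_add_one_right_eq_Icc]

lemma sum_Icc_ite_lt {M : Type*} [AddCommMonoid M] (f : ℕ → M) (d n : ℕ) :
    ∑ x ∈ Icc 1 n, (if d < x then f x else 0) = ∑ k ∈ Icc 1 (n - d), f (d + k) := by
  rw [← sum_filter]
  refine sum_nbij' (fun x => x - d) (fun k => d + k) ?_ ?_ ?_ ?_ ?_ <;> intro x hx <;>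
    simp_all <;> first | omega | (congr 1; omega)

lemma card_filter_Icc_le {x M : ℕ} (h : x ≤ M) : #{v ∈ Icc 1 M | v ≤ x} = x := by
  rw [show {v ∈ Icc 1 M | v ≤ x} = Icc 1 x by ext v; simp only [mem_filter, mem_Icc]; omega]
  simp

lemma sum_Icc_one_eq_of_le {f : ℕ → ℕ} {p p' : ℕ} (h : p ≤ p') (hf : ∀ i, p < i → f i = 0) :
    ∑ i ∈ Icc 1 p', f i = ∑ i ∈ Icc 1 p, f i :=
  (sum_subset (Icc_subset_Icc le_rfl h) fun i hi hi' => hf i (by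
    simp only [mem_Icc] at hi hi'
    omega)).symm

section Conj

/-- The conjugate of the partition `(g 1, …, g N)`, evaluated at `v`. -/
def conj (g : ℕ → ℕ) (N v : ℕ) : ℕ := #{j ∈ Icc 1 N | v ≤ g j}

variable {g g' : ℕ → ℕ} {N v : ℕ}

lemma conj_le (g : ℕ → ℕ) (N v : ℕ) : conj g N v ≤ N := by
  simpa [conj] using card_filter_le (Icc 1 N) (fun j => v ≤ g j)

lemma conj_le_conj {v' : ℕ} (h : ∀ j, 1 ≤ j → j ≤ N → v ≤ g j → v' ≤ g' j) :
    conj g N v ≤ conj g' N v' := by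
  refine card_le_card fun j hj => ?_
  simp only [mem_filter, mem_Icc] at hj ⊢
  exact ⟨hj.1, h j hj.1.1 hj.1.2 hj.2⟩

lemma conj_antitone (g : ℕ → ℕ) (N : ℕ) : Antitone (conj g N) :=
  fun _ _ hvv' => conj_le_conj fun _ _ _ hv => hvv'.trans hv

lemma conj_congr (h : ∀ j, 1 ≤ j → j ≤ N → g j = g' j) : conj g N v = conj g' N v :=
  le_antisymm (conj_le_conj fun j h1 h2 hv => (h j h1 h2) ▸ hv)
    (conj_le_conj fun j h1 h2 hv => (h j h1 h2).symm ▸ hv)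

lemma conj_sub_one (hv : 1 ≤ v) : conj (fun j => g j - 1) N v = conj g N (v + 1) := by
  unfold conj
  congr 1
  exact filter_congr fun j _ => show v ≤ g j - 1 ↔ v + 1 ≤ g j by omega

lemma conj_one_eq_sum_min (g : ℕ → ℕ) (N : ℕ) : conj g N 1 = ∑ j ∈ Icc 1 N, min (g j) 1 := by
  rw [conj, card_filter]
  exact sum_congr rfl fun j _ => by split <;> omega

lemma le_conj_iff (hg : AntitoneOn g (Set.Ici 1)) {j : ℕ} (hj : 1 ≤ j) (hjN : j ≤ N) :
    j ≤ conj g N v ↔ v ≤ g j := by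
  constructor
  · intro h
    by_contra hv
    have hsub : {x ∈ Icc 1 N | v ≤ g x} ⊆ Icc 1 (j - 1) := fun x hx => by
      simp only [mem_filter, mem_Icc] at hx ⊢
      refine ⟨hx.1.1, not_lt.1 fun hjx => hv ?_⟩
      exact hx.2.trans (hg (Set.mem_Ici.2 hj) (Set.mem_Ici.2 hx.1.1) (by omega))
    have := card_le_card hsub
    simp only [Nat.card_Icc] at this
    exact absurd h (by unfold conj; omega)
  · intro h
    have hsub : Icc 1 j ⊆ {x ∈ Icc 1 N | v ≤ g x} := fun x hx => by
      simp only [mem_filter, mem_Icc] at hx ⊢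
      exact ⟨⟨hx.1, hx.2.trans hjN⟩, h.trans (hg (Set.mem_Ici.2 hx.1) (Set.mem_Ici.2 hj) hx.2)⟩
    simpa [conj] using card_le_card hsub

lemma conj_conj (hg : AntitoneOn g (Set.Ici 1)) {M j : ℕ} (hj : 1 ≤ j) (hjN : j ≤ N)
    (hM : g j ≤ M) : conj (conj g N) M j = g j := by
  change #{v ∈ Icc 1 M | j ≤ conj g N v} = g j
  rw [filter_congr fun v _ => le_conj_iff hg hj hjN]
  exact card_filter_Icc_le hM

lemma sum_conj {M : ℕ} (hgM : ∀ j, 1 ≤ j → j ≤ N → g j ≤ M) :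
    ∑ v ∈ Icc 1 M, conj g N v = ∑ j ∈ Icc 1 N, g j := by
  simp only [conj, card_filter]
  rw [sum_comm]
  refine sum_congr rfl fun j hj => ?_
  rw [← card_filter, card_filter_Icc_le (hgM j (mem_Icc.1 hj).1 (mem_Icc.1 hj).2)]

lemma conj_le_conj_add_one_of_lt (hv : 1 ≤ v)
    (h : ∀ j, g' j ≠ 0 → g' j < g j) : conj g' N v ≤ conj g N (v + 1) :=
  conj_le_conj fun j _ _ hvj => by have := h j (by omega); omega

lemma conj_lt_conj {N' : ℕ} (hg' : AntitoneOn g' (Set.Ici 1)) (hg : AntitoneOn g (Set.Ici 1))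
    (hdom : ∀ k, 1 ≤ k → g' k ≤ g (k + 1)) (hN : N' < N) (hv : conj g' N' v ≠ 0) :
    conj g' N' v < conj g N v := by
  have hle := conj_le g' N' v
  have hv' : v ≤ g' (conj g' N' v) := (le_conj_iff hg' (by omega) hle).1 le_rfl
  exact (le_conj_iff hg (by omega) (by omega)).2 (hv'.trans (hdom _ (by omega)))

end Conj

section Entries

variable {p q n : ℕ} (M : Fin p → Fin q → Fin (n+1))

lemma pent_le (i j : ℕ) : pent M i j ≤ n := by
  unfold pent
  split
  · exact Fin.is_le _
  · exact Nat.zero_le _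

variable {M}

lemma bounds_of_pent_ne_zero {i j : ℕ} (h : pent M i j ≠ 0) :
    1 ≤ i ∧ i ≤ p ∧ 1 ≤ j ∧ j ≤ q := by
  unfold pent at h
  split at h
  · assumption
  · exact absurd rfl h

lemma pent_eq_zero_of_not_bounds {i j : ℕ} (h : ¬(1 ≤ i ∧ i ≤ p ∧ 1 ≤ j ∧ j ≤ q)) :
    pent M i j = 0 :=
  dif_neg h

lemma pent_of_bounds {i j : ℕ} (h1 : 1 ≤ i) (h2 : i ≤ p) (h3 : 1 ≤ j) (h4 : j ≤ q) :
    pent M i j = M ⟨i - 1, by omega⟩ ⟨j - 1, by omega⟩ :=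
  dif_pos ⟨h1, h2, h3, h4⟩

lemma pent_succ_succ (i : Fin p) (j : Fin q) : pent M (i + 1) (j + 1) = M i j := by
  rw [pent_of_bounds (by omega) (by omega) (by omega) (by omega)]
  rfl

end Entries

section PlanePartition

variable {a b c : ℕ} {π : Fin a → Fin b → Fin (c+1)}

lemma _root_.IsPP.pent_le_of_le_fst (hπ : IsPP a b c π) {i i' j : ℕ} (h1 : 1 ≤ i) (h : i ≤ i') :
    pent π i' j ≤ pent π i j := by
  by_cases hz : pent π i' j = 0
  · omega
  obtain ⟨_, hi', hj1, hjb⟩ := bounds_of_pent_ne_zero hz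
  rw [pent_of_bounds (by omega) hi' hj1 hjb, pent_of_bounds h1 (by omega) hj1 hjb]
  exact hπ.1 _ _ _ (Fin.mk_le_mk.2 (by omega))

lemma _root_.IsPP.pent_le_of_le_snd (hπ : IsPP a b c π) {i j j' : ℕ} (h1 : 1 ≤ j) (h : j ≤ j') :
    pent π i j' ≤ pent π i j := by
  by_cases hz : pent π i j' = 0
  · omega
  obtain ⟨hi1, hia, _, hj'⟩ := bounds_of_pent_ne_zero hz
  rw [pent_of_bounds hi1 hia (by omega) hj', pent_of_bounds hi1 hia h1 (by omega)]
  exact hπ.2 _ _ _ (Fin.mk_le_mk.2 (by omega))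

lemma mem_ppBox : π ∈ ppBox a b c ↔ IsPP a b c π := by
  simp [ppBox]

end PlanePartition

section Tableaux

variable {p q n : ℕ}

/-- A column-strict tableau with entries in `{1,…,n}` whose diagram fits in `[p]×[q]`, stored as
the matrix of its entries with `0` on the cells outside the diagram. -/
def IsTab (M : Fin p → Fin q → Fin (n+1)) : Prop :=
  (∀ i, AntitoneOn (pent M i) (Set.Ici 1)) ∧
  ∀ i i' j, 1 ≤ i → i < i' → pent M i' j ≠ 0 → pent M i' j < pent M i j

variable {M : Fin p → Fin q → Fin (n+1)}

lemma IsTab.pent_add_sub_le (hM : IsTab M) {i i' j : ℕ} (h1 : 1 ≤ i) (h : i ≤ i')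
    (hz : pent M i' j ≠ 0) : pent M i' j + (i' - i) ≤ pent M i j := by
  induction i', h using Nat.le_induction with
  | base => omega
  | succ k hk ih =>
    have hstep := hM.2 k (k + 1) j (by omega) (by omega) hz
    have := ih (by omega)
    omega

lemma IsTab.pent_le_sub (hM : IsTab M) {i : ℕ} (h1 : 1 ≤ i) (j : ℕ) : pent M i j ≤ n + 1 - i := by
  by_cases hz : pent M i j = 0
  · omega
  have := hM.pent_add_sub_le le_rfl h1 hz
  have := pent_le M 1 j
  omega

lemma IsTab.pent_ne_zero_of_le (hM : IsTab M) {i j i₂ j₂ : ℕ} (hi : i₂ ≤ i) (hj : j₂ ≤ j)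
    (h1 : 1 ≤ i₂) (h2 : 1 ≤ j₂) (hz : pent M i j ≠ 0) : pent M i₂ j₂ ≠ 0 := by
  have hrow : pent M i j ≤ pent M i j₂ := hM.1 i (Set.mem_Ici.2 h2) (Set.mem_Ici.2 (h2.trans hj)) hj
  rcases hi.eq_or_lt with rfl | h
  · omega
  · have := hM.2 i₂ i j₂ h1 h (by omega)
    omega

lemma isTab_of_pent_eq_conj {m k n : ℕ} {M : Fin m → Fin k → Fin (n+1)} {f : ℕ → ℕ → ℕ}
    {N : ℕ → ℕ} (hM : ∀ i j, 1 ≤ i → i ≤ m → 1 ≤ j → j ≤ k → pent M i j = conj (f i) (N i) j)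
    (hf : ∀ i, 1 ≤ i → AntitoneOn (f i) (Set.Ici 1))
    (hdom : ∀ i i', 1 ≤ i → i < i' → i' ≤ m → ∀ l, 1 ≤ l → f i' l ≤ f i (l + 1))
    (hN : ∀ i i', 1 ≤ i → i < i' → i' ≤ m → N i' < N i) : IsTab M := by
  constructor
  · intro i j hj j' _ hjj'
    by_cases hz : pent M i j' = 0
    · omega
    obtain ⟨hi1, him, -, hj'k⟩ := bounds_of_pent_ne_zero hz
    rw [hM i j hi1 him hj (by omega), hM i j' hi1 him (by simp at hj; omega) hj'k]
    exact conj_antitone _ _ hjj'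
  · intro i i' j h1 hii' hz
    obtain ⟨-, hi'm, hj1, hjk⟩ := bounds_of_pent_ne_zero hz
    rw [hM i' j (by omega) hi'm hj1 hjk] at hz ⊢
    rw [hM i j h1 (by omega) hj1 hjk]
    exact conj_lt_conj (hf i' (by omega)) (hf i h1) (hdom i i' h1 hii' hi'm)
      (hN i i' h1 hii' hi'm) hz

end Tableaux

section Shapes

def boxCells (m k : ℕ) : Finset (ℕ × ℕ) := range m ×ˢ range k

def diagramsIn (m k : ℕ) : Finset YoungDiagram :=
  ((boxCells m k).powerset.filter fun s : Finset (ℕ × ℕ) =>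
      IsLowerSet (s : Set (ℕ × ℕ))).attach.image
    fun s => { cells := s.1, isLowerSet := by have h := s.2; rw [mem_filter] at h; exact h.2 }

lemma mem_diagramsIn {m k : ℕ} {μ : YoungDiagram} :
    μ ∈ diagramsIn m k ↔ μ.cells ⊆ boxCells m k := by
  unfold diagramsIn
  constructor
  · rintro h
    obtain ⟨s, -, rfl⟩ := mem_image.1 h
    exact mem_powerset.1 (mem_filter.1 s.2).1
  · intro h
    exact mem_image.2
      ⟨⟨μ.cells, mem_filter.2 ⟨mem_powerset.2 h, μ.isLowerSet⟩⟩, mem_attach _ _, rfl⟩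

lemma mem_diagramsIn_iff {m k : ℕ} {μ : YoungDiagram} :
    μ ∈ diagramsIn m k ↔ μ.colLen 0 ≤ m ∧ μ.rowLen 0 ≤ k := by
  rw [mem_diagramsIn]
  constructor
  · intro h
    constructor
    · by_contra! hm
      simpa [boxCells] using h (YoungDiagram.mem_iff_lt_colLen.2 hm)
    · by_contra! hk
      simpa [boxCells] using h (YoungDiagram.mem_iff_lt_rowLen.2 hk)
  · rintro ⟨hm, hk⟩ ⟨i, j⟩ hij
    have hcol := YoungDiagram.mem_iff_lt_colLen.1 hij
    have hrow := YoungDiagram.mem_iff_lt_rowLen.1 hij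
    have := μ.colLen_anti 0 j (Nat.zero_le _)
    have := μ.rowLen_anti 0 i (Nat.zero_le _)
    simp only [boxCells, mem_product, mem_range]
    omega

variable {p q n n' : ℕ}

def HasShape (M : Fin p → Fin q → Fin (n+1)) (μ : YoungDiagram) : Prop :=
  ∀ i j : ℕ, pent M (i + 1) (j + 1) ≠ 0 ↔ (i, j) ∈ μ

def SameSupport (M : Fin p → Fin q → Fin (n+1)) (M' : Fin p → Fin q → Fin (n'+1)) : Prop :=
  ∀ i j : ℕ, pent M i j = 0 ↔ pent M' i j = 0

lemma SameSupport.conj_one_eq {M : Fin p → Fin q → Fin (n+1)} {M' : Fin p → Fin q → Fin (n'+1)}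
    (hE : SameSupport M M') (i N : ℕ) : conj (pent M i) N 1 = conj (pent M' i) N 1 := by
  unfold conj
  congr 1
  exact filter_congr fun j _ => by have := hE i j; omega

lemma HasShape.sameSupport {M : Fin p → Fin q → Fin (n+1)} {M' : Fin p → Fin q → Fin (n'+1)}
    {μ : YoungDiagram} (h : HasShape M μ) (h' : HasShape M' μ) : SameSupport M M' := by
  intro i j
  by_cases hij : 1 ≤ i ∧ 1 ≤ j
  · obtain ⟨i, rfl⟩ : ∃ t, i = t + 1 := ⟨i - 1, by omega⟩
    obtain ⟨j, rfl⟩ : ∃ t, j = t + 1 := ⟨j - 1, by omega⟩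
    rw [← not_iff_not]
    exact (h i j).trans (h' i j).symm
  · rw [pent_eq_zero_of_not_bounds (by omega), pent_eq_zero_of_not_bounds (by omega)]

lemma HasShape.unique {M : Fin p → Fin q → Fin (n+1)} {μ ν : YoungDiagram}
    (h : HasShape M μ) (h' : HasShape M ν) : μ = ν := by
  ext ⟨i, j⟩
  rw [YoungDiagram.mem_cells, YoungDiagram.mem_cells, ← h i j, ← h' i j]

lemma IsTab.exists_hasShape {M : Fin p → Fin q → Fin (n+1)} (hM : IsTab M) :
    ∃ μ ∈ diagramsIn p q, HasShape M μ := by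
  let s := {x ∈ boxCells p q | pent M (x.1 + 1) (x.2 + 1) ≠ 0}
  have hlow : IsLowerSet (s : Set (ℕ × ℕ)) := by
    rintro ⟨i, j⟩ ⟨i₂, j₂⟩ hle hx
    obtain ⟨h1, h2⟩ := Prod.mk_le_mk.1 hle
    simp only [s, coe_filter, boxCells, mem_product, mem_range, Set.mem_ofPred_eq] at hx ⊢
    exact ⟨⟨by omega, by omega⟩,
      hM.pent_ne_zero_of_le (by omega) (by omega) (by omega) (by omega) hx.2⟩
  refine ⟨⟨s, hlow⟩, mem_diagramsIn.2 (filter_subset _ _), fun i j => ?_⟩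
  rw [← YoungDiagram.mem_cells]
  change _ ↔ (i, j) ∈ s
  simp only [s, mem_filter, boxCells, mem_product, mem_range]
  constructor
  · intro hz
    have := bounds_of_pent_ne_zero hz
    exact ⟨⟨by omega, by omega⟩, hz⟩
  · exact And.right

end Shapes

section Schur

variable {m k n : ℕ} {μ : YoungDiagram}

def tabsOfShape (m k n : ℕ) (μ : YoungDiagram) : Finset (Fin m → Fin k → Fin (n+1)) :=
  {M | IsTab M ∧ HasShape M μ}

def tabWeight {R : Type*} [CommMonoid R] {p q : ℕ} (x : ℕ → R) (M : Fin p → Fin q → Fin (n+1)) :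
    R :=
  ∏ i ∈ Icc 1 p, ∏ j ∈ Icc 1 q, if pent M i j = 0 then 1 else x (pent M i j)

def matrixOfFilling (m k : ℕ) (T : μ.cells → Fin n) : Fin m → Fin k → Fin (n+1) :=
  fun i j => if h : ((i : ℕ), (j : ℕ)) ∈ μ then (T ⟨_, (YoungDiagram.mem_cells _).2 h⟩).succ else 0

def fillingOfMatrix {M : Fin m → Fin k → Fin (n+1)} (hM : HasShape M μ) : μ.cells → Fin n :=
  fun cl => ⟨pent M (cl.1.1 + 1) (cl.1.2 + 1) - 1, Nat.sub_one_lt_of_le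
    (Nat.pos_of_ne_zero ((hM _ _).2 ((YoungDiagram.mem_cells _).1 cl.2))) (pent_le M _ _)⟩

lemma pent_matrixOfFilling (hμ : μ ∈ diagramsIn m k) (T : μ.cells → Fin n) {i j : ℕ}
    (h : (i, j) ∈ μ) :
    pent (matrixOfFilling m k T) (i + 1) (j + 1)
      = T ⟨(i, j), (YoungDiagram.mem_cells _).2 h⟩ + 1 := by
  have hbox := mem_diagramsIn.1 hμ ((YoungDiagram.mem_cells _).2 h)
  simp only [boxCells, mem_product, mem_range] at hbox
  rw [pent_of_bounds (by omega) (by omega) (by omega) (by omega)]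
  simp [matrixOfFilling, h]

lemma hasShape_matrixOfFilling (hμ : μ ∈ diagramsIn m k) (T : μ.cells → Fin n) :
    HasShape (matrixOfFilling m k T) μ := by
  intro i j
  refine ⟨fun hz => ?_, fun h => by rw [pent_matrixOfFilling hμ T h]; omega⟩
  by_contra h
  obtain ⟨-, hi, -, hj⟩ := bounds_of_pent_ne_zero hz
  rw [pent_of_bounds (by omega) hi (by omega) hj] at hz
  simp [matrixOfFilling, h] at hz

lemma isTab_matrixOfFilling (hμ : μ ∈ diagramsIn m k) {T : μ.cells → Fin n}
    (hT : IsCSPP μ n T) : IsTab (matrixOfFilling m k T) := by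
  have hS := hasShape_matrixOfFilling hμ T
  constructor
  · intro i j hj j' _ hjj'
    by_cases hz : pent (matrixOfFilling m k T) i j' = 0
    · omega
    obtain ⟨hi1, -, -, -⟩ := bounds_of_pent_ne_zero hz
    obtain ⟨i, rfl⟩ : ∃ t, i = t + 1 := ⟨i - 1, by omega⟩
    obtain ⟨j', rfl⟩ : ∃ t, j' = t + 1 := ⟨j' - 1, by simp at hj; omega⟩
    obtain ⟨j, rfl⟩ : ∃ t, j = t + 1 := ⟨j - 1, by simp at hj; omega⟩
    have hc' := (hS i j').1 hz
    have hc : (i, j) ∈ μ := μ.isLowerSet (Prod.mk_le_mk.2 ⟨le_rfl, by omega⟩) hc'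
    rw [pent_matrixOfFilling hμ T hc', pent_matrixOfFilling hμ T hc]
    exact Nat.succ_le_succ (hT.1 ⟨_, (YoungDiagram.mem_cells _).2 hc⟩
      ⟨_, (YoungDiagram.mem_cells _).2 hc'⟩ rfl (by simp only; omega))
  · intro i i' j h1 hii' hz
    obtain ⟨-, -, hj1, -⟩ := bounds_of_pent_ne_zero hz
    obtain ⟨i', rfl⟩ : ∃ t, i' = t + 1 := ⟨i' - 1, by omega⟩
    obtain ⟨i, rfl⟩ : ∃ t, i = t + 1 := ⟨i - 1, by omega⟩
    obtain ⟨j, rfl⟩ : ∃ t, j = t + 1 := ⟨j - 1, by omega⟩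
    have hc' := (hS i' j).1 hz
    have hc : (i, j) ∈ μ := μ.isLowerSet (Prod.mk_le_mk.2 ⟨by omega, le_rfl⟩) hc'
    rw [pent_matrixOfFilling hμ T hc', pent_matrixOfFilling hμ T hc]
    exact Nat.succ_lt_succ (hT.2 ⟨_, (YoungDiagram.mem_cells _).2 hc⟩
      ⟨_, (YoungDiagram.mem_cells _).2 hc'⟩ rfl (by simp only; omega))

lemma isCSPP_fillingOfMatrix {M : Fin m → Fin k → Fin (n+1)} (hM : IsTab M) (hS : HasShape M μ) :
    IsCSPP μ n (fillingOfMatrix hS) := by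
  constructor
  · rintro ⟨⟨i, j⟩, -⟩ ⟨⟨i', j'⟩, hc'⟩ (rfl : i = i') (hjj' : j ≤ j')
    have hz := (hS i j').2 ((YoungDiagram.mem_cells _).1 hc')
    have := hM.1 (i + 1) (Set.mem_Ici.2 (by omega : 1 ≤ j + 1)) (Set.mem_Ici.2 (by omega))
      (by omega : j + 1 ≤ j' + 1)
    simp only [fillingOfMatrix, Fin.mk_le_mk]
    omega
  · rintro ⟨⟨i, j⟩, -⟩ ⟨⟨i', j'⟩, hc'⟩ (rfl : j = j') (hii' : i < i')
    have hz := (hS i' j).2 ((YoungDiagram.mem_cells _).1 hc')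
    have := hM.2 (i + 1) (i' + 1) (j + 1) (by omega) (by omega) hz
    simp only [fillingOfMatrix, Fin.mk_lt_mk]
    omega

lemma fillingOfMatrix_matrixOfFilling (hμ : μ ∈ diagramsIn m k) (T : μ.cells → Fin n) :
    fillingOfMatrix (hasShape_matrixOfFilling hμ T) = T := by
  funext ⟨⟨i, j⟩, hc⟩
  ext
  simp [fillingOfMatrix, pent_matrixOfFilling hμ T ((YoungDiagram.mem_cells _).1 hc)]

lemma matrixOfFilling_fillingOfMatrix {M : Fin m → Fin k → Fin (n+1)} (hS : HasShape M μ) :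
    matrixOfFilling m k (fillingOfMatrix hS) = M := by
  funext i j
  have hS' := hS i j
  rw [pent_succ_succ] at hS'
  by_cases h : ((i : ℕ), (j : ℕ)) ∈ μ
  · ext
    have := hS'.2 h
    simp only [matrixOfFilling, h, dite_true, Fin.val_succ, fillingOfMatrix, pent_succ_succ]
    omega
  · simp only [matrixOfFilling, h, dite_false]
    exact Fin.ext (not_not.1 (mt hS'.1 h)).symm

lemma prod_filling_eq_tabWeight {R : Type*} [CommMonoid R] (hμ : μ ∈ diagramsIn m k)
    (T : μ.cells → Fin n) (x : ℕ → R) :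
    ∏ cl : μ.cells, x ((T cl : ℕ) + 1) = tabWeight x (matrixOfFilling m k T) := by
  set F := matrixOfFilling m k T
  let w : ℕ × ℕ → R := fun ij =>
    if pent F (ij.1 + 1) (ij.2 + 1) = 0 then 1 else x (pent F (ij.1 + 1) (ij.2 + 1))
  calc ∏ cl : μ.cells, x ((T cl : ℕ) + 1)
      = ∏ cl ∈ μ.cells.attach, w cl.1 := by
        rw [univ_eq_attach]
        refine prod_congr rfl fun ⟨⟨i, j⟩, hc⟩ _ => ?_
        simp [w, F, pent_matrixOfFilling hμ T ((YoungDiagram.mem_cells _).1 hc)]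
    _ = ∏ ij ∈ boxCells m k, w ij := by
        rw [prod_attach]
        refine prod_subset (mem_diagramsIn.1 hμ) fun ⟨i, j⟩ _ hij => if_pos ?_
        exact not_not.1 fun hz =>
          hij ((YoungDiagram.mem_cells _).2 ((hasShape_matrixOfFilling hμ T i j).1 hz))
    _ = tabWeight x F := by
        simp only [boxCells, prod_product, tabWeight, prod_Icc_eq_prod_range_succ, w]

lemma schur_eq_sum_tabWeight {R : Type*} [CommSemiring R] (hμ : μ ∈ diagramsIn m k)
    (x : ℕ → R) : schur n μ x = ∑ M ∈ tabsOfShape m k n μ, tabWeight x M := by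
  refine sum_bij' (fun T _ => matrixOfFilling m k T)
    (fun M hM => fillingOfMatrix (mem_filter.1 hM).2.2) (fun T hT => ?_) (fun M hM => ?_)
    (fun T _ => fillingOfMatrix_matrixOfFilling hμ T)
    (fun M hM => matrixOfFilling_fillingOfMatrix _) (fun T _ => prod_filling_eq_tabWeight hμ T x)
  · exact mem_filter.2 ⟨mem_univ _, isTab_matrixOfFilling hμ (mem_filter.1 hT).2,
      hasShape_matrixOfFilling hμ T⟩
  · exact mem_filter.2 ⟨mem_univ _, isCSPP_fillingOfMatrix (mem_filter.1 hM).2.1 _⟩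

end Schur

section Pairs

variable {m k n n' : ℕ}

def entrySum {p q : ℕ} (M : Fin p → Fin q → Fin (n+1)) : ℕ :=
  ∑ i ∈ Icc 1 p, ∑ j ∈ Icc 1 q, pent M i j

def suppCard {p q : ℕ} (M : Fin p → Fin q → Fin (n+1)) : ℕ :=
  ∑ i ∈ Icc 1 p, ∑ j ∈ Icc 1 q, min (pent M i j) 1

def predSum {p q : ℕ} (M : Fin p → Fin q → Fin (n+1)) : ℕ :=
  ∑ i ∈ Icc 1 p, ∑ j ∈ Icc 1 q, (pent M i j - 1)

lemma ppVol_eq_entrySum {a b c : ℕ} (π : Fin a → Fin b → Fin (c+1)) : ppVol π = entrySum π := by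
  rw [ppVol, entrySum, sum_Icc_eq_sum_range_succ,
    ← Fin.sum_univ_eq_sum_range (fun i => ∑ j ∈ Icc 1 b, pent π (i + 1) j)]
  refine sum_congr rfl fun i _ => ?_
  rw [sum_Icc_eq_sum_range_succ, ← Fin.sum_univ_eq_sum_range (fun j => pent π (i + 1) (j + 1))]
  simp only [pent_succ_succ]

lemma tabWeight_pow {R : Type*} [CommMonoid R] (x : R) {p q : ℕ} (M : Fin p → Fin q → Fin (n+1)) :
    tabWeight (fun e => x ^ e) M = x ^ entrySum M := by
  have h (e : ℕ) : (if e = 0 then 1 else x ^ e) = x ^ e := by split <;> simp_all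
  simp only [tabWeight, h, prod_pow_eq_pow_sum, entrySum]

lemma tabWeight_mul_pow_sub_one {R : Type*} [CommMonoid R] (t x : R) {p q : ℕ}
    (M : Fin p → Fin q → Fin (n+1)) :
    tabWeight (fun e => t * x ^ (e - 1)) M = t ^ suppCard M * x ^ predSum M := by
  have h (e : ℕ) : (if e = 0 then 1 else t * x ^ (e - 1)) = t ^ min e 1 * x ^ (e - 1) := by
    rcases e with _ | e <;> simp
  simp only [tabWeight, h, prod_mul_distrib, prod_pow_eq_pow_sum, suppCard, predSum]

def tabPairs (m k n n' : ℕ) :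
    Finset ((Fin m → Fin k → Fin (n+1)) × (Fin m → Fin k → Fin (n'+1))) :=
  {P | IsTab P.1 ∧ IsTab P.2 ∧ SameSupport P.1 P.2}

lemma mem_tabPairs {P : (Fin m → Fin k → Fin (n+1)) × (Fin m → Fin k → Fin (n'+1))} :
    P ∈ tabPairs m k n n' ↔ IsTab P.1 ∧ IsTab P.2 ∧ SameSupport P.1 P.2 := by
  simp [tabPairs]

lemma tabPairs_eq_biUnion : tabPairs m k n n' =
    (diagramsIn m k).biUnion fun μ => tabsOfShape m k n μ ×ˢ tabsOfShape m k n' μ := by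
  ext ⟨M, M'⟩
  simp only [tabPairs, tabsOfShape, mem_biUnion, mem_product, mem_filter, mem_univ, true_and]
  constructor
  · rintro ⟨hM, hM', hE⟩
    obtain ⟨μ, hμ, hS⟩ := hM.exists_hasShape
    exact ⟨μ, hμ, ⟨hM, hS⟩, hM', fun i j => (not_congr (hE (i + 1) (j + 1))).symm.trans (hS i j)⟩
  · rintro ⟨μ, -, ⟨hM, hS⟩, hM', hS'⟩
    exact ⟨hM, hM', hS.sameSupport hS'⟩

lemma pairwiseDisjoint_tabsOfShape_product :
    (diagramsIn m k : Set YoungDiagram).PairwiseDisjoint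
      fun μ => tabsOfShape m k n μ ×ˢ tabsOfShape m k n' μ := by
  intro μ _ ν _ hne
  refine disjoint_left.2 fun P hP hP' => hne ?_
  simp only [tabsOfShape, mem_product, mem_filter] at hP hP'
  exact hP.1.2.2.unique hP'.1.2.2

lemma finsum_schur_mul_schur {R : Type*} [CommSemiring R] (q t : R) (a b c : ℕ) :
    ∑ᶠ (μ : YoungDiagram) (_ : μ.colLen 0 ≤ min a b ∧ μ.rowLen 0 ≤ c),
        schur a μ (fun i => q ^ i) * schur b μ (fun j => t * q ^ (j - 1))
      = ∑ P ∈ tabPairs (min a b) c a b,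
          q ^ entrySum P.1 * (t ^ suppCard P.2 * q ^ predSum P.2) := by
  simp_rw [← mem_diagramsIn_iff, ← mem_coe, finsum_mem_coe_finset]
  rw [tabPairs_eq_biUnion, sum_biUnion pairwiseDisjoint_tabsOfShape_product]
  refine sum_congr rfl fun μ hμ => ?_
  rw [schur_eq_sum_tabWeight hμ, schur_eq_sum_tabWeight hμ, sum_mul_sum, sum_product]
  simp only [tabWeight_pow, tabWeight_mul_pow_sub_one]

end Pairs

section Bijection

variable {a b c : ℕ}

/-- Entry `(r, s)` (1-based) of the plane partition glued from `M` (on and below the diagonal)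
and `M'` (above it). -/
def ppOfTabsEntry (M : Fin (min a b) → Fin c → Fin (a+1)) (M' : Fin (min a b) → Fin c → Fin (b+1))
    (r s : ℕ) : ℕ :=
  if s ≤ r then conj (pent M s) c (r - s + 1) else conj (pent M' r) c (s - r + 1)

def ppOfTabs (M : Fin (min a b) → Fin c → Fin (a+1)) (M' : Fin (min a b) → Fin c → Fin (b+1)) :
    Fin a → Fin b → Fin (c+1) :=
  fun r s => ⟨ppOfTabsEntry M M' (r + 1) (s + 1), by
    unfold ppOfTabsEntry
    split <;> exact Nat.lt_succ_of_le (conj_le _ _ _)⟩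

def colConj (π : Fin a → Fin b → Fin (c+1)) (i : ℕ) : ℕ → ℕ :=
  conj (fun l => pent π (i + l - 1) i) (a - i + 1)

def rowConj (π : Fin a → Fin b → Fin (c+1)) (i : ℕ) : ℕ → ℕ :=
  conj (fun l => pent π i (i + l - 1)) (b - i + 1)

def tabsOfPP (π : Fin a → Fin b → Fin (c+1)) :
    (Fin (min a b) → Fin c → Fin (a+1)) × (Fin (min a b) → Fin c → Fin (b+1)) :=
  (fun i j => ⟨colConj π (i + 1) (j + 1), Nat.lt_succ_of_le ((conj_le _ _ _).trans (by omega))⟩,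
   fun i j => ⟨rowConj π (i + 1) (j + 1), Nat.lt_succ_of_le ((conj_le _ _ _).trans (by omega))⟩)

section Gluing

variable {M : Fin (min a b) → Fin c → Fin (a+1)} {M' : Fin (min a b) → Fin c → Fin (b+1)}

lemma pent_ppOfTabs {r s : ℕ} (h1 : 1 ≤ r) (h2 : r ≤ a) (h3 : 1 ≤ s) (h4 : s ≤ b) :
    pent (ppOfTabs M M') r s = ppOfTabsEntry M M' r s := by
  rw [pent_of_bounds h1 h2 h3 h4]
  change ppOfTabsEntry M M' (r - 1 + 1) (s - 1 + 1) = _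
  congr 1 <;> omega

lemma ppOfTabsEntry_of_le {r s : ℕ} (h : s ≤ r) :
    ppOfTabsEntry M M' r s = conj (pent M s) c (r - s + 1) :=
  if_pos h

lemma SameSupport.ppOfTabsEntry_of_ge (hE : SameSupport M M') {r s : ℕ} (h : r ≤ s) :
    ppOfTabsEntry M M' r s = conj (pent M' r) c (s - r + 1) := by
  unfold ppOfTabsEntry
  split_ifs with hsr
  · obtain rfl : s = r := le_antisymm hsr h
    simpa using hE.conj_one_eq s c
  · rfl

lemma antitoneOn_ppOfTabsEntry_fst (hM' : IsTab M') (hE : SameSupport M M') (s : ℕ) :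
    AntitoneOn (fun r => ppOfTabsEntry M M' r s) (Set.Ici 1) := by
  refine antitoneOn_nat_Ici_of_succ_le fun r (hr : 1 ≤ r) => ?_
  rcases le_or_gt s r with hsr | hsr
  · rw [ppOfTabsEntry_of_le (by omega), ppOfTabsEntry_of_le hsr]
    exact conj_antitone _ _ (by omega)
  · rw [hE.ppOfTabsEntry_of_ge (by omega), hE.ppOfTabsEntry_of_ge (by omega),
      show s - r + 1 = s - (r + 1) + 1 + 1 by omega]
    exact conj_le_conj_add_one_of_lt (by omega) fun j hz => hM'.2 r (r + 1) j hr (by omega) hz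

lemma antitoneOn_ppOfTabsEntry_snd (hM : IsTab M) (hE : SameSupport M M') (r : ℕ) :
    AntitoneOn (ppOfTabsEntry M M' r) (Set.Ici 1) := by
  refine antitoneOn_nat_Ici_of_succ_le fun s (hs : 1 ≤ s) => ?_
  rcases lt_or_ge s r with hsr | hsr
  · rw [ppOfTabsEntry_of_le (by omega), ppOfTabsEntry_of_le (by omega),
      show r - s + 1 = r - (s + 1) + 1 + 1 by omega]
    exact conj_le_conj_add_one_of_lt (by omega) fun j hz => hM.2 s (s + 1) j hs (by omega) hz
  · rw [hE.ppOfTabsEntry_of_ge (by omega), hE.ppOfTabsEntry_of_ge hsr]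
    exact conj_antitone _ _ (by omega)

lemma isPP_ppOfTabs (hM : IsTab M) (hM' : IsTab M') (hE : SameSupport M M') :
    IsPP a b c (ppOfTabs M M') := by
  constructor
  · intro i i' j hii'
    exact antitoneOn_ppOfTabsEntry_fst hM' hE _ (Set.mem_Ici.2 (by omega))
      (Set.mem_Ici.2 (by omega)) (by simpa using hii')
  · intro i j j' hjj'
    exact antitoneOn_ppOfTabsEntry_snd hM hE _ (Set.mem_Ici.2 (by omega))
      (Set.mem_Ici.2 (by omega)) (by simpa using hjj')

lemma tabsOfPP_ppOfTabs (hM : IsTab M) (hM' : IsTab M') (hE : SameSupport M M') :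
    tabsOfPP (ppOfTabs M M') = (M, M') := by
  have := min_le_left a b
  have := min_le_right a b
  refine Prod.ext (funext fun i => funext fun j => Fin.ext ?_)
    (funext fun i => funext fun j => Fin.ext ?_)
  all_goals
    have hi := i.isLt
    have hj := j.isLt
  · change colConj (ppOfTabs M M') (i + 1) (j + 1) = M i j
    rw [colConj, conj_congr (g' := conj (pent M (i + 1)) c) fun l hl1 hl2 => ?_,
      conj_conj (hM.1 _) (by omega) (by omega) ((hM.pent_le_sub (by omega) _).trans (by omega)),
      pent_succ_succ]
    rw [pent_ppOfTabs (by omega) (by omega) (by omega) (by omega), ppOfTabsEntry_of_le (by omega)]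
    congr 1
    omega
  · change rowConj (ppOfTabs M M') (i + 1) (j + 1) = M' i j
    rw [rowConj, conj_congr (g' := conj (pent M' (i + 1)) c) fun l hl1 hl2 => ?_,
      conj_conj (hM'.1 _) (by omega) (by omega) ((hM'.pent_le_sub (by omega) _).trans (by omega)),
      pent_succ_succ]
    rw [pent_ppOfTabs (by omega) (by omega) (by omega) (by omega),
      hE.ppOfTabsEntry_of_ge (by omega)]
    congr 1
    omega

end Gluing

section Slicing

variable {π : Fin a → Fin b → Fin (c+1)}

lemma _root_.IsPP.antitoneOn_col (hπ : IsPP a b c π) {i : ℕ} (hi : 1 ≤ i) :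
    AntitoneOn (fun l => pent π (i + l - 1) i) (Set.Ici 1) :=
  fun l hl _ _ hll' => hπ.pent_le_of_le_fst (by simp only [Set.mem_Ici] at hl; omega) (by omega)

lemma _root_.IsPP.antitoneOn_row (hπ : IsPP a b c π) {i : ℕ} (hi : 1 ≤ i) :
    AntitoneOn (fun l => pent π i (i + l - 1)) (Set.Ici 1) :=
  fun l hl _ _ hll' => hπ.pent_le_of_le_snd (by simp only [Set.mem_Ici] at hl; omega) (by omega)

lemma pent_tabsOfPP_fst {i j : ℕ} (h1 : 1 ≤ i) (h2 : i ≤ min a b) (h3 : 1 ≤ j) (h4 : j ≤ c) :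
    pent (tabsOfPP π).1 i j = colConj π i j := by
  rw [pent_of_bounds h1 h2 h3 h4]
  change colConj π (i - 1 + 1) (j - 1 + 1) = _
  rw [Nat.sub_add_cancel h1, Nat.sub_add_cancel h3]

lemma pent_tabsOfPP_snd {i j : ℕ} (h1 : 1 ≤ i) (h2 : i ≤ min a b) (h3 : 1 ≤ j) (h4 : j ≤ c) :
    pent (tabsOfPP π).2 i j = rowConj π i j := by
  rw [pent_of_bounds h1 h2 h3 h4]
  change rowConj π (i - 1 + 1) (j - 1 + 1) = _
  rw [Nat.sub_add_cancel h1, Nat.sub_add_cancel h3]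

lemma isTab_tabsOfPP_fst (hπ : IsPP a b c π) : IsTab (tabsOfPP π).1 :=
  isTab_of_pent_eq_conj (f := fun i l => pent π (i + l - 1) i) (N := fun i => a - i + 1)
    (fun _ _ h1 h2 h3 h4 => pent_tabsOfPP_fst h1 h2 h3 h4) (fun _ hi => hπ.antitoneOn_col hi)
    (fun i i' h1 hii' _ l _ => by
      rw [show i + (l + 1) - 1 = i + l by omega]
      exact (hπ.pent_le_of_le_snd h1 hii'.le).trans (hπ.pent_le_of_le_fst (by omega) (by omega)))
    (fun _ _ _ _ _ => by have := min_le_left a b; omega)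

lemma isTab_tabsOfPP_snd (hπ : IsPP a b c π) : IsTab (tabsOfPP π).2 :=
  isTab_of_pent_eq_conj (f := fun i l => pent π i (i + l - 1)) (N := fun i => b - i + 1)
    (fun _ _ h1 h2 h3 h4 => pent_tabsOfPP_snd h1 h2 h3 h4) (fun _ hi => hπ.antitoneOn_row hi)
    (fun i i' h1 hii' _ l _ => by
      rw [show i + (l + 1) - 1 = i + l by omega]
      exact (hπ.pent_le_of_le_fst h1 hii'.le).trans (hπ.pent_le_of_le_snd (by omega) (by omega)))
    (fun _ _ _ _ _ => by have := min_le_right a b; omega)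

lemma _root_.IsPP.one_le_colConj_iff (hπ : IsPP a b c π) {i j : ℕ} (h1 : 1 ≤ i) :
    1 ≤ colConj π i j ↔ j ≤ pent π i i := by
  simpa [colConj] using
    le_conj_iff (hπ.antitoneOn_col h1) (N := a - i + 1) (v := j) le_rfl (by omega)

lemma _root_.IsPP.one_le_rowConj_iff (hπ : IsPP a b c π) {i j : ℕ} (h1 : 1 ≤ i) :
    1 ≤ rowConj π i j ↔ j ≤ pent π i i := by
  simpa [rowConj] using
    le_conj_iff (hπ.antitoneOn_row h1) (N := b - i + 1) (v := j) le_rfl (by omega)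

lemma sameSupport_tabsOfPP (hπ : IsPP a b c π) : SameSupport (tabsOfPP π).1 (tabsOfPP π).2 := by
  intro i j
  by_cases h : 1 ≤ i ∧ i ≤ min a b ∧ 1 ≤ j ∧ j ≤ c
  · obtain ⟨h1, h2, h3, h4⟩ := h
    rw [pent_tabsOfPP_fst h1 h2 h3 h4, pent_tabsOfPP_snd h1 h2 h3 h4]
    have := hπ.one_le_colConj_iff (j := j) h1
    have := hπ.one_le_rowConj_iff (j := j) h1
    omega
  · rw [pent_eq_zero_of_not_bounds h, pent_eq_zero_of_not_bounds h]

lemma ppOfTabs_tabsOfPP (hπ : IsPP a b c π) : ppOfTabs (tabsOfPP π).1 (tabsOfPP π).2 = π := by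
  funext r s
  apply Fin.ext
  change ppOfTabsEntry _ _ (r + 1) (s + 1) = _
  have hr := r.isLt
  have hs := s.isLt
  rw [← pent_succ_succ (M := π) r s]
  unfold ppOfTabsEntry
  split_ifs with hsr
  · rw [conj_congr (g' := colConj π (s + 1)) fun j h1 h2 =>
        pent_tabsOfPP_fst (by omega) (by omega) h1 h2, colConj,
      conj_conj (hπ.antitoneOn_col (by omega)) (by omega) (by omega) (pent_le π _ _)]
    congr 1
    omega
  · rw [conj_congr (g' := rowConj π (r + 1)) fun j h1 h2 =>
        pent_tabsOfPP_snd (by omega) (by omega) h1 h2, rowConj,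
      conj_conj (hπ.antitoneOn_row (by omega)) (by omega) (by omega) (pent_le π _ _)]
    congr 1
    omega

end Slicing

section Weights

variable {M : Fin (min a b) → Fin c → Fin (a+1)} {M' : Fin (min a b) → Fin c → Fin (b+1)}

lemma sum_ppOfTabs_lower (hM : IsTab M) {s : ℕ} (hs : 1 ≤ s) (hsb : s ≤ b) :
    ∑ r ∈ Icc 1 a, (if s - 1 < r then pent (ppOfTabs M M') r s else 0)
      = ∑ j ∈ Icc 1 c, pent M s j := by
  rw [sum_Icc_ite_lt, ← sum_conj (g := pent M s) (M := a - (s - 1))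
    fun j _ _ => (hM.pent_le_sub hs j).trans (by omega)]
  refine sum_congr rfl fun k hk => ?_
  simp only [mem_Icc] at hk
  rw [pent_ppOfTabs (by omega) (by omega) hs hsb, ppOfTabsEntry_of_le (by omega)]
  congr 1
  omega

lemma sum_ppOfTabs_upper (hM' : IsTab M') (hE : SameSupport M M') {r : ℕ} (hr : 1 ≤ r)
    (hra : r ≤ a) :
    ∑ s ∈ Icc 1 b, (if r < s then pent (ppOfTabs M M') r s else 0)
      = ∑ j ∈ Icc 1 c, (pent M' r j - 1) := by
  rw [sum_Icc_ite_lt, ← sum_conj (g := fun j => pent M' r j - 1) (M := b - r)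
    fun j _ _ => by have := hM'.pent_le_sub hr j; omega]
  refine sum_congr rfl fun k hk => ?_
  simp only [mem_Icc] at hk
  rw [pent_ppOfTabs hr hra (by omega) (by omega), hE.ppOfTabsEntry_of_ge (by omega),
    conj_sub_one hk.1]
  congr 1
  omega

lemma ppVol_ppOfTabs (hM : IsTab M) (hM' : IsTab M') (hE : SameSupport M M') :
    ppVol (ppOfTabs M M') = entrySum M + predSum M' := by
  set G := ppOfTabs M M'
  have hlow := fun s (hs : s ∈ Icc 1 b) =>
    sum_ppOfTabs_lower (M' := M') hM (mem_Icc.1 hs).1 (mem_Icc.1 hs).2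
  have hup := fun r (hr : r ∈ Icc 1 a) =>
    sum_ppOfTabs_upper hM' hE (mem_Icc.1 hr).1 (mem_Icc.1 hr).2
  calc ppVol G = ∑ r ∈ Icc 1 a, ∑ s ∈ Icc 1 b, pent G r s := ppVol_eq_entrySum G
    _ = ∑ r ∈ Icc 1 a, ∑ s ∈ Icc 1 b, (if s - 1 < r then pent G r s else 0)
        + ∑ r ∈ Icc 1 a, ∑ s ∈ Icc 1 b, (if r < s then pent G r s else 0) := by
      rw [← sum_add_distrib]
      refine sum_congr rfl fun r _ => ?_
      rw [← sum_add_distrib]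
      refine sum_congr rfl fun s hs => ?_
      have := (mem_Icc.1 hs).1
      split_ifs <;> omega
    _ = ∑ s ∈ Icc 1 b, ∑ j ∈ Icc 1 c, pent M s j
        + ∑ r ∈ Icc 1 a, ∑ j ∈ Icc 1 c, (pent M' r j - 1) := by
      rw [sum_comm, sum_congr rfl hlow, sum_congr rfl hup]
    _ = entrySum M + predSum M' := by
      rw [entrySum, predSum,
        sum_Icc_one_eq_of_le (min_le_right a b) fun i hi =>
          sum_eq_zero fun j _ => pent_eq_zero_of_not_bounds (by omega),
        sum_Icc_one_eq_of_le (min_le_left a b) fun i hi =>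
          sum_eq_zero fun j _ => by
            have := pent_eq_zero_of_not_bounds (M := M') (i := i) (j := j) (by omega)
            omega]

lemma ppTr_ppOfTabs (hE : SameSupport M M') : ppTr (ppOfTabs M M') = suppCard M' := by
  refine sum_congr rfl fun i hi => ?_
  simp only [mem_Icc] at hi
  rw [pent_ppOfTabs (by omega) (by omega) (by omega) (by omega), hE.ppOfTabsEntry_of_ge le_rfl,
    Nat.sub_self, conj_one_eq_sum_min]

end Weights

end Bijection

end PlanePartitionSchur

open Finset PlanePartitionSchur

theorem statement13_general (a b c : ℕ) :
    ∑ᶠ (μ : YoungDiagram) (_ : μ.colLen 0 ≤ min a b ∧ μ.rowLen 0 ≤ c),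
        schur a μ (fun i => (MvPolynomial.X 0 : MvPolynomial (Fin 2) ℤ) ^ i) *
          schur b μ (fun j => MvPolynomial.X 1 * MvPolynomial.X 0 ^ (j - 1))
      = ∑ π ∈ ppBox a b c,
          (MvPolynomial.X 0 : MvPolynomial (Fin 2) ℤ) ^ ppVol π *
            MvPolynomial.X 1 ^ ppTr π := by
  rw [finsum_schur_mul_schur]
  refine sum_nbij' (fun P => ppOfTabs P.1 P.2) tabsOfPP ?_ ?_ ?_ ?_ ?_ <;>
    simp only [mem_tabPairs, mem_ppBox, and_imp, Prod.forall]
  · exact fun M M' hM hM' hE => isPP_ppOfTabs hM hM' hE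
  · exact fun π hπ => ⟨isTab_tabsOfPP_fst hπ, isTab_tabsOfPP_snd hπ, sameSupport_tabsOfPP hπ⟩
  · exact fun M M' hM hM' hE => tabsOfPP_ppOfTabs hM hM' hE
  · exact fun π hπ => ppOfTabs_tabsOfPP hπ
  · intro M M' hM hM' hE
    rw [ppVol_ppOfTabs hM hM' hE, ppTr_ppOfTabs hE, pow_add]
    ring

/-- For all positive integers `a, b, c`, as polynomials in `q = X 0`, `t = X 1`:
`Σ_{λ ∈ P(min(a,b),c)} s_λ(q,…,q^a) s_λ(t,tq,…,tq^{b-1})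
  = Σ_{π ∈ PP(a,b,c)} q^{|π|} t^{tr(π)}`. -/
theorem statement13 (a b c : ℕ) (ha : 0 < a) (hb : 0 < b) (hc : 0 < c) :
    ∑ᶠ (μ : YoungDiagram) (_ : μ.colLen 0 ≤ min a b ∧ μ.rowLen 0 ≤ c),
        schur a μ (fun i => (MvPolynomial.X 0 : MvPolynomial (Fin 2) ℤ) ^ i) *
          schur b μ (fun j => MvPolynomial.X 1 * MvPolynomial.X 0 ^ (j - 1))
      = ∑ π ∈ ppBox a b c,
          (MvPolynomial.X 0 : MvPolynomial (Fin 2) ℤ) ^ ppVol π *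
            MvPolynomial.X 1 ^ ppTr π :=
  statement13_general a b c
end
end
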